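/- arXiv:2112.12734 — 5 statements merged into one kernel-verified Lean document; each statement's English description precedes it below -/
import Mathlib

section
/- There exists N₀ ∈ ℕ such that for every natural number N ≥ N₀ and all integers n, j with |n| ≥ N² and |j| ≥ N⁶, the number of ordered pairs (n₁, n₂) ∈ ℤ² with |n₁| ≤ N and |n₂| ≤ N satisfying P(n₁) + P(n₂) + P(n − n₁ − n₂) = j is at most 3. -/
/-!
For `|n| ≥ N²` the third frequency `x = n - n₁ - n₂` is of size `≈ N²`, and
`2 (P x - P y) = (x - y) ((x - 2)² + (y - 2)² + (x + y)² + 8)` shows that distinct values of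
`x` give values of `P x` at distance `≳ N⁴`, whereas `P n₁ + P n₂` only varies by `O(N³)`.
Hence all solutions share the same sum `m = n₁ + n₂`. For fixed `m`,
`P a + P (m - a) - P b - P (m - b) = (3m - 4)(a - b)(a + b - m)` and `3m - 4 ≠ 0`,
so the only solutions are `(a, m - a)` and `(m - a, a)`: there are at most two.
-/

open scoped BigOperators

/-- Dispersion relation of the linearized 1D periodic Dysthe equation. -/
def P (n : ℤ) : ℤ := n ^ 3 - 2 * n ^ 2 + 8 * n

/-- `rcount N n j` is the number of ordered pairs `(n₁, n₂) ∈ ℤ²` with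
`|n₁| ≤ N`, `|n₂| ≤ N` satisfying `P n₁ + P n₂ + P (n - n₁ - n₂) = j`. -/
noncomputable def rcount (N : ℕ) (n j : ℤ) : ℕ :=
  ((Finset.Icc (-(N : ℤ)) (N : ℤ) ×ˢ Finset.Icc (-(N : ℤ)) (N : ℤ)).filter
    (fun q => P q.1 + P q.2 + P (n - q.1 - q.2) = j)).card

lemma abs_P_le {M a : ℤ} (ha : |a| ≤ M) : |P a| ≤ M ^ 3 + 2 * M ^ 2 + 8 * M := by
  calc |P a| ≤ |a| ^ 3 + 2 * |a| ^ 2 + 8 * |a| := by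
        unfold P
        refine (abs_add_le _ _).trans (add_le_add ((abs_sub _ _).trans ?_) ?_) <;>
          simp [abs_mul, abs_pow]
    _ ≤ M ^ 3 + 2 * M ^ 2 + 8 * M := by gcongr

lemma two_mul_sub_P (x y : ℤ) :
    2 * (P x - P y) = (x - y) * ((x - 2) ^ 2 + (y - 2) ^ 2 + (x + y) ^ 2 + 8) := by
  unfold P; ring

lemma sq_sub_two_add_eight_le {x y : ℤ} (hxy : x ≠ y) :
    (x - 2) ^ 2 + 8 ≤ 2 * |P x - P y| := by
  have hpos : 0 ≤ (x - 2) ^ 2 + (y - 2) ^ 2 + (x + y) ^ 2 + 8 := by positivity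
  calc (x - 2) ^ 2 + 8 ≤ (x - 2) ^ 2 + (y - 2) ^ 2 + (x + y) ^ 2 + 8 := by
        nlinarith [sq_nonneg (y - 2), sq_nonneg (x + y)]
    _ ≤ |x - y| * ((x - 2) ^ 2 + (y - 2) ^ 2 + (x + y) ^ 2 + 8) :=
        le_mul_of_one_le_left hpos (Int.one_le_abs (sub_ne_zero.mpr hxy))
    _ = 2 * |P x - P y| := by
        rw [← abs_of_nonneg hpos, ← abs_mul, ← two_mul_sub_P, abs_mul, abs_two]

lemma P_add_P_sub_sub (m a b : ℤ) :
    P a + P (m - a) - (P b + P (m - b)) = (3 * m - 4) * (a - b) * (a + b - m) := by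
  unfold P; ring

lemma eq_or_add_eq_of_P_add_P_sub_eq {m a b : ℤ} (h : P a + P (m - a) = P b + P (m - b)) :
    a = b ∨ a + b = m := by
  have hm : 3 * m - 4 ≠ 0 := by omega
  have := P_add_P_sub_sub m a b
  rw [sub_eq_zero.mpr h, eq_comm, mul_eq_zero, mul_eq_zero] at this
  omega

lemma add_eq_add_of_P_sum_eq {N n a₁ a₂ b₁ b₂ : ℤ} (hN : 14 ≤ N) (hn : N ^ 2 ≤ |n|)
    (ha₁ : |a₁| ≤ N) (ha₂ : |a₂| ≤ N) (hb₁ : |b₁| ≤ N) (hb₂ : |b₂| ≤ N)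
    (h : P a₁ + P a₂ + P (n - a₁ - a₂) = P b₁ + P b₂ + P (n - b₁ - b₂)) :
    a₁ + a₂ = b₁ + b₂ := by
  by_contra hne
  have hgap := sq_sub_two_add_eight_le (x := n - a₁ - a₂) (y := n - b₁ - b₂) (by omega)
  have hdiff : |P (n - a₁ - a₂) - P (n - b₁ - b₂)| ≤ 4 * (N ^ 3 + 2 * N ^ 2 + 8 * N) := by
    have := abs_P_le ha₁; have := abs_P_le ha₂; have := abs_P_le hb₁; have := abs_P_le hb₂
    rw [abs_le] at *
    constructor <;> linarith
  have hfar : N ^ 2 - 2 * N - 2 ≤ |n - a₁ - a₂ - 2| := by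
    rw [abs_le] at ha₁ ha₂
    cases abs_cases n <;> cases abs_cases (n - a₁ - a₂ - 2) <;> omega
  have hsq : (N ^ 2 - 2 * N - 2) ^ 2 ≤ (n - a₁ - a₂ - 2) ^ 2 := by
    rw [← sq_abs (n - a₁ - a₂ - 2)]
    exact pow_le_pow_left₀ (by nlinarith) hfar 2
  -- `(N² - 2N - 2)² + 8 > 8 (N³ + 2N² + 8N)` as soon as `N ≥ 14`
  nlinarith

lemma card_le_two_of_eq_or_eq_swap {α : Type*} {S : Finset (α × α)}
    (h : ∀ p ∈ S, ∀ q ∈ S, p = q ∨ p = q.swap) : S.card ≤ 2 := by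
  classical
  obtain rfl | ⟨q, hq⟩ := S.eq_empty_or_nonempty
  · simp
  refine (Finset.card_le_card fun p hp => ?_).trans (Finset.card_le_two (a := q) (b := q.swap))
  rcases h p hp q hq with rfl | rfl <;> simp

lemma eq_or_eq_swap_of_P_sum_eq {N n : ℤ} (hN : 14 ≤ N) (hn : N ^ 2 ≤ |n|) {p q : ℤ × ℤ}
    (hp : |p.1| ≤ N ∧ |p.2| ≤ N) (hq : |q.1| ≤ N ∧ |q.2| ≤ N)
    (h : P p.1 + P p.2 + P (n - p.1 - p.2) = P q.1 + P q.2 + P (n - q.1 - q.2)) :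
    p = q ∨ p = q.swap := by
  have hsum := add_eq_add_of_P_sum_eq hN hn hp.1 hp.2 hq.1 hq.2 h
  have hq₂ : q.2 = p.1 + p.2 - q.1 := by omega
  have hpair : P p.1 + P (p.1 + p.2 - p.1) = P q.1 + P (p.1 + p.2 - q.1) := by
    rw [add_sub_cancel_left, ← hq₂]
    rw [show n - q.1 - q.2 = n - p.1 - p.2 by omega] at h
    linarith
  rcases eq_or_add_eq_of_P_add_P_sub_eq hpair with h₁ | h₁
  · exact .inl (Prod.ext h₁ (by omega))
  · exact .inr (Prod.ext (by rw [Prod.fst_swap]; omega) (by rw [Prod.snd_swap]; omega))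

theorem stmt1 :
    ∃ N₀ : ℕ, ∀ (N : ℕ), N₀ ≤ N → ∀ (n j : ℤ),
      (N : ℤ) ^ 2 ≤ |n| → (N : ℤ) ^ 6 ≤ |j| → rcount N n j ≤ 3 := by
  refine ⟨14, fun N hN n j hn _ => (card_le_two_of_eq_or_eq_swap ?_).trans (by norm_num)⟩
  intro p hp q hq
  simp only [Finset.mem_filter, Finset.mem_product, Finset.mem_Icc, ← abs_le] at hp hq
  exact eq_or_eq_swap_of_P_sum_eq (by exact_mod_cast hN) hn hp.1 hq.1 (hp.2.trans hq.2.symm)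
end

section
/- For every ε > 0 there exists a constant C_ε > 0, depending only on ε, such that for every natural number N ≥ 1 and all integers n, j, the number of ordered pairs (n₁, n₂) ∈ ℤ² with |n₁| ≤ N and |n₂| ≤ N satisfying P(n₁) + P(n₂) + P(n − n₁ − n₂) = j is at most C_ε N^ε. -/
open scoped BigOperators

/-!
For `x + y + z = n` one has
`(3(x+y) - 4)(3(y+z) - 4)(3(z+x) - 4) = 9(n-2)³ + 60(n-2) + 128 - 9(P x + P y + P z)`,
so every solution factors a fixed integer `T`, which is `≡ 2 mod 3` and hence nonzero.
A solution is determined up to swapping `n₁, n₂` by `s = n₁ + n₂`, and `3s - 4 ∣ T`.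
If `|n| ≤ 7N²` then `|T| ≤ (7N)⁵` and the divisor bound leaves `O(N^ε)` choices of `s`.
If `|n| > 7N²` the two other factors are both close to `3|n|`, which confines `|3s - 4|`
to a window of width `30`.
-/

open Finset

theorem add_one_le_pow_of_two_le {y : ℝ} (hy : 2 ≤ y) (a : ℕ) : (a : ℝ) + 1 ≤ y ^ a :=
  calc (a : ℝ) + 1 ≤ 2 ^ a := by exact_mod_cast Nat.lt_two_pow_self
    _ ≤ y ^ a := pow_le_pow_left₀ zero_le_two hy a

theorem add_one_le_div_mul_pow {b y : ℝ} (hb : 1 < b) (hby : b ≤ y) (a : ℕ) :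
    (a : ℝ) + 1 ≤ b / (b - 1) * y ^ a := by
  have bernoulli : 1 + a * (y - 1) ≤ y ^ a := by
    simpa using one_add_mul_le_pow (a := y - 1) (by linarith) a
  have ha : (0 : ℝ) ≤ a := a.cast_nonneg
  rw [div_mul_eq_mul_div, le_div_iff₀ (by linarith)]
  nlinarith [mul_le_mul_of_nonneg_left bernoulli (by linarith : 0 ≤ b),
    mul_nonneg (mul_nonneg ha (sub_nonneg.mpr hby)) (by linarith : 0 ≤ b),
    mul_nonneg ha (sq_nonneg (b - 1))]

theorem Nat.exists_card_divisors_le_mul_rpow {δ : ℝ} (hδ : 0 < δ) :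
    ∃ D : ℝ, 0 < D ∧ ∀ m : ℕ, m ≠ 0 → (#m.divisors : ℝ) ≤ D * (m : ℝ) ^ δ := by
  have h2δ : 1 < (2 : ℝ) ^ δ := Real.one_lt_rpow one_lt_two hδ
  set K : ℝ := 2 ^ δ / (2 ^ δ - 1)
  have hK : 1 ≤ K := by rw [le_div_iff₀ (by linarith)]; linarith
  set B : ℕ := ⌈(2 : ℝ) ^ δ⁻¹⌉₊
  refine ⟨K ^ B, by positivity, fun m hm => ?_⟩
  -- only the primes with `p ^ δ < 2` contribute a factor `K`, and they all lie below `B`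
  have small_lt : ∀ p : ℕ, (p : ℝ) ^ δ < 2 → p < B := fun p hp => by
    refine Nat.lt_ceil.mpr (lt_of_not_ge fun h => hp.not_ge ?_)
    calc (2 : ℝ) = (2 ^ δ⁻¹) ^ δ := (Real.rpow_inv_rpow zero_le_two hδ.ne').symm
      _ ≤ (p : ℝ) ^ δ := Real.rpow_le_rpow (by positivity) h hδ.le
  have local_bound : ∀ p ∈ m.primeFactors, (m.factorization p : ℝ) + 1 ≤
      (if (p : ℝ) ^ δ < 2 then K else 1) * (((p ^ m.factorization p : ℕ) : ℝ) ^ δ) := by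
    intro p hp
    have hp2 : (2 : ℝ) ≤ p := by exact_mod_cast (Nat.prime_of_mem_primeFactors hp).two_le
    rw [Nat.cast_pow, ← Real.rpow_pow_comm (Nat.cast_nonneg p)]
    split_ifs with h
    · exact add_one_le_div_mul_pow h2δ (Real.rpow_le_rpow zero_le_two hp2 hδ.le) _
    · rw [one_mul]; exact add_one_le_pow_of_two_le (not_lt.mp h) _
  calc (#m.divisors : ℝ) = ∏ p ∈ m.primeFactors, ((m.factorization p : ℝ) + 1) := by
        rw [Nat.card_divisors hm]; push_cast; rfl
    _ ≤ ∏ p ∈ m.primeFactors,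
          (if (p : ℝ) ^ δ < 2 then K else 1) * (((p ^ m.factorization p : ℕ) : ℝ) ^ δ) :=
        prod_le_prod (fun _ _ => by positivity) local_bound
    _ = K ^ #(m.primeFactors.filter fun p : ℕ => (p : ℝ) ^ δ < 2) * (m : ℝ) ^ δ := by
        rw [prod_mul_distrib, prod_ite, prod_const, prod_const_one, mul_one,
          Real.finsetProd_rpow _ _ (fun _ _ => by positivity), ← Nat.cast_prod,
          ← Nat.prod_primeFactors_pow_factorization hm]
    _ ≤ K ^ B * (m : ℝ) ^ δ := by
        refine mul_le_mul_of_nonneg_right (pow_le_pow_right₀ hK ?_) (by positivity)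
        exact (card_le_card fun p hp => mem_range.mpr (small_lt p (mem_filter.mp hp).2)).trans
          (card_range B).le

theorem Finset.card_le_of_forall_le_add {s : Finset ℕ} {W : ℕ}
    (h : ∀ a ∈ s, ∀ b ∈ s, a ≤ b + W) : #s ≤ W + 1 := by
  rcases s.eq_empty_or_nonempty with rfl | hs
  · simp
  calc #s ≤ #(Icc (s.min' hs) (s.min' hs + W)) :=
        card_le_card fun a ha => mem_Icc.mpr ⟨s.min'_le a ha, h a ha _ (s.min'_mem hs)⟩
    _ = W + 1 := by rw [Nat.card_Icc]; omega

theorem le_add_of_mul_sq_le_mul_sq {α : Type*} [CommRing α] [LinearOrder α]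
    [IsStrictOrderedRing α] {a b L U W : α} (hL : 0 < L) (h : a * L ^ 2 ≤ b * U ^ 2)
    (hW : b * (U ^ 2 - L ^ 2) ≤ W * L ^ 2) :
    a ≤ b + W :=
  le_of_mul_le_mul_right (by linarith) (pow_pos hL 2)

namespace Dysthe

def resonance (n j : ℤ) : ℤ := 9 * (n - 2) ^ 3 + 60 * (n - 2) + 128 - 9 * j

theorem resonance_P_add_P_add_P (n x y : ℤ) :
    resonance n (P x + P y + P (n - x - y)) =
      (3 * (x + y) - 4) * (3 * (n - x) - 4) * (3 * (n - y) - 4) := by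
  simp only [resonance, P]
  ring

theorem resonance_ne_zero (n j : ℤ) : resonance n j ≠ 0 := by
  have : resonance n j = 3 * (3 * (n - 2) ^ 3 + 20 * (n - 2) + 42 - 3 * j) + 2 := by
    simp only [resonance]; ring
  omega

theorem natAbs_three_mul_sub_four_injective :
    Function.Injective fun s : ℤ => (3 * s - 4).natAbs := by
  intro s t h
  rcases Int.natAbs_eq_natAbs_iff.mp h with h | h <;> omega

theorem eq_or_eq_sub_of_P_add_P_sub_eq {s x y : ℤ} (h : P x + P (s - x) = P y + P (s - y)) :
    y = x ∨ y = s - x := by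
  have : (x - y) * (x + y - s) * (3 * s - 4) = 0 := by
    simp only [P] at h
    linear_combination h
  rcases mul_eq_zero.mp this with h | h
  · rcases mul_eq_zero.mp h with h | h
    · left; linarith
    · right; linarith
  · omega

theorem le_abs_three_mul_sub_sub_four {N n x : ℤ} (hx : |x| ≤ N) :
    3 * |n| - 3 * N - 4 ≤ |3 * (n - x) - 4| := by
  rw [abs_le] at hx
  rcases abs_cases n with ⟨hn, _⟩ | ⟨hn, _⟩ <;> rw [hn, le_abs] <;> omega

theorem abs_three_mul_sub_sub_four_le {N n x : ℤ} (hx : |x| ≤ N) :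
    |3 * (n - x) - 4| ≤ 3 * |n| + 3 * N + 4 := by
  rw [abs_le] at hx ⊢
  rcases abs_cases n with ⟨hn, _⟩ | ⟨hn, _⟩ <;> rw [hn] <;> omega

noncomputable def solutions (N : ℕ) (n j : ℤ) : Finset (ℤ × ℤ) :=
  (Icc (-(N : ℤ)) N ×ˢ Icc (-(N : ℤ)) N).filter fun q => P q.1 + P q.2 + P (n - q.1 - q.2) = j

theorem rcount_eq_card_solutions (N : ℕ) (n j : ℤ) : rcount N n j = #(solutions N n j) := rfl

theorem mem_solutions {N : ℕ} {n j : ℤ} {q : ℤ × ℤ} :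
    q ∈ solutions N n j ↔
      |q.1| ≤ N ∧ |q.2| ≤ N ∧ P q.1 + P q.2 + P (n - q.1 - q.2) = j := by
  simp [solutions, abs_le, and_assoc]

noncomputable def sums (N : ℕ) (n j : ℤ) : Finset ℤ :=
  (solutions N n j).image fun q => q.1 + q.2

theorem card_filter_add_eq_le_two (N : ℕ) (n j s : ℤ) :
    #((solutions N n j).filter fun q => q.1 + q.2 = s) ≤ 2 := by
  rcases ((solutions N n j).filter fun q => q.1 + q.2 = s).eq_empty_or_nonempty with
    h | ⟨q₀, hq₀⟩
  · simp [h]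
  have reduce : ∀ q ∈ (solutions N n j).filter (fun q => q.1 + q.2 = s),
      q.2 = s - q.1 ∧ P q.1 + P (s - q.1) = j - P (n - s) := by
    intro q hq
    obtain ⟨hq, hqs⟩ := mem_filter.mp hq
    obtain ⟨-, -, hq⟩ := mem_solutions.mp hq
    refine ⟨by omega, ?_⟩
    rw [show n - q.1 - q.2 = n - s by omega, show q.2 = s - q.1 by omega] at hq
    linarith
  refine (card_le_card fun q hq => ?_).trans
    (card_le_two (a := (q₀.1, s - q₀.1)) (b := (s - q₀.1, q₀.1)))
  obtain ⟨hq2, hq⟩ := reduce q hq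
  obtain ⟨-, hq₀⟩ := reduce q₀ hq₀
  rcases eq_or_eq_sub_of_P_add_P_sub_eq (hq₀.trans hq.symm) with h | h <;>
    simp [Prod.ext_iff, h, hq2]

theorem card_solutions_le_two_mul_card_sums (N : ℕ) (n j : ℤ) :
    #(solutions N n j) ≤ 2 * #(sums N n j) :=
  card_le_mul_card_image _ 2 fun s _ => card_filter_add_eq_le_two N n j s

theorem exists_of_mem_sums {N : ℕ} {n j s : ℤ} (hs : s ∈ sums N n j) :
    ∃ x y : ℤ, |x| ≤ N ∧ |y| ≤ N ∧ x + y = s ∧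
      (3 * s - 4) * (3 * (n - x) - 4) * (3 * (n - y) - 4) = resonance n j := by
  obtain ⟨⟨x, y⟩, hq, rfl⟩ := mem_image.mp hs
  obtain ⟨hx, hy, rfl⟩ := mem_solutions.mp hq
  exact ⟨x, y, hx, hy, rfl, (resonance_P_add_P_add_P n x y).symm⟩

theorem abs_three_mul_sub_four_le_of_mem_sums {N : ℕ} {n j s : ℤ} (hs : s ∈ sums N n j) :
    |3 * s - 4| ≤ 6 * N + 4 := by
  obtain ⟨x, y, hx, hy, rfl, -⟩ := exists_of_mem_sums hs
  rw [abs_le] at hx hy ⊢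
  omega

theorem card_sums_le_card_divisors (N : ℕ) (n j : ℤ) :
    #(sums N n j) ≤ #(resonance n j).natAbs.divisors := by
  refine card_le_card_of_injOn _ (fun s hs => ?_) natAbs_three_mul_sub_four_injective.injOn
  obtain ⟨x, y, -, -, -, h⟩ := exists_of_mem_sums hs
  refine Nat.mem_divisors.mpr ⟨Int.natAbs_dvd_natAbs.mpr ⟨_, by rw [← h, mul_assoc]⟩, ?_⟩
  exact Int.natAbs_ne_zero.mpr (resonance_ne_zero n j)

theorem abs_resonance_le {N : ℕ} {n j s : ℤ} (hN : 1 ≤ N) (hn : |n| ≤ 7 * N ^ 2)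
    (hs : s ∈ sums N n j) : |resonance n j| ≤ (7 * N) ^ 5 := by
  obtain ⟨x, y, hx, hy, -, h⟩ := exists_of_mem_sums hs
  have factor_le : ∀ {z : ℤ}, |z| ≤ N → |3 * (n - z) - 4| ≤ 28 * N ^ 2 := fun hz =>
    (abs_three_mul_sub_sub_four_le hz).trans (by nlinarith)
  calc |resonance n j| = |3 * s - 4| * |3 * (n - x) - 4| * |3 * (n - y) - 4| := by
        rw [← h, abs_mul, abs_mul]
    _ ≤ (10 * N) * (28 * N ^ 2) * (28 * N ^ 2) := by
        gcongr
        · exact (abs_three_mul_sub_four_le_of_mem_sums hs).trans (by omega)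
        · exact factor_le hx
        · exact factor_le hy
    _ = 7840 * (N : ℤ) ^ 5 := by ring
    _ ≤ (7 * N) ^ 5 := by rw [mul_pow]; gcongr; norm_num

theorem mul_sq_sub_sq_le_thirty_mul_sq_of_large {N m : ℤ} (hN : 1 ≤ N) (hm : 7 * N ^ 2 < m) :
    (6 * N + 4) * ((3 * m + 3 * N + 4) ^ 2 - (3 * m - 3 * N - 4) ^ 2) ≤
      30 * (3 * m - 3 * N - 4) ^ 2 := by
  have hm0 : 0 ≤ m := by nlinarith
  nlinarith [mul_nonneg hm0 (show (0 : ℤ) ≤ 624 * N ^ 2 - 432 * N - 72 by nlinarith),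
    mul_le_mul_of_nonneg_left hm (show (0 : ℤ) ≤ 120 * m by linarith)]

theorem abs_three_mul_sub_four_le_add_of_large {N : ℕ} {n j s t : ℤ} (hN : 1 ≤ N)
    (hn : 7 * N ^ 2 < |n|) (hs : s ∈ sums N n j) (ht : t ∈ sums N n j) :
    |3 * s - 4| ≤ |3 * t - 4| + 30 := by
  obtain ⟨x, y, hx, hy, -, hxy⟩ := exists_of_mem_sums hs
  obtain ⟨x', y', hx', hy', -, hxy'⟩ := exists_of_mem_sums ht
  set L : ℤ := 3 * |n| - 3 * N - 4
  set U : ℤ := 3 * |n| + 3 * N + 4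
  have hL : 0 < L := by nlinarith
  -- every factor of `resonance n j` other than `3 s - 4` has absolute value in `[L, U]`
  refine le_add_of_mul_sq_le_mul_sq hL (b := |3 * t - 4|) (U := U) ?_ ?_
  · calc |3 * s - 4| * L ^ 2 ≤ |3 * s - 4| * |3 * (n - x) - 4| * |3 * (n - y) - 4| := by
          rw [sq, ← mul_assoc]
          gcongr
          · exact le_abs_three_mul_sub_sub_four hx
          · exact le_abs_three_mul_sub_sub_four hy
      _ = |3 * t - 4| * |3 * (n - x') - 4| * |3 * (n - y') - 4| := by
          rw [← abs_mul, ← abs_mul, ← abs_mul, ← abs_mul, hxy, hxy']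
      _ ≤ |3 * t - 4| * U ^ 2 := by
          rw [sq, ← mul_assoc]
          gcongr
          · exact abs_three_mul_sub_sub_four_le hx'
          · exact abs_three_mul_sub_sub_four_le hy'
  · calc |3 * t - 4| * (U ^ 2 - L ^ 2) ≤ (6 * N + 4) * (U ^ 2 - L ^ 2) := by
          gcongr
          · nlinarith
          · exact abs_three_mul_sub_four_le_of_mem_sums ht
      _ ≤ 30 * L ^ 2 := mul_sq_sub_sq_le_thirty_mul_sq_of_large (by exact_mod_cast hN) hn

theorem card_sums_le_of_large {N : ℕ} {n j : ℤ} (hN : 1 ≤ N) (hn : 7 * N ^ 2 < |n|) :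
    #(sums N n j) ≤ 31 := by
  rw [← card_image_of_injective _ natAbs_three_mul_sub_four_injective]
  refine card_le_of_forall_le_add fun a ha b hb => ?_
  obtain ⟨s, hs, rfl⟩ := mem_image.mp ha
  obtain ⟨t, ht, rfl⟩ := mem_image.mp hb
  have := abs_three_mul_sub_four_le_add_of_large hN hn hs ht
  simp only [Int.abs_eq_natAbs] at this
  omega

theorem card_sums_le_of_small {D δ : ℝ}
    (hdiv : ∀ m : ℕ, m ≠ 0 → (#m.divisors : ℝ) ≤ D * (m : ℝ) ^ δ) (hD : 0 ≤ D)
    (hδ : 0 ≤ δ) {N : ℕ} {n j : ℤ} (hN : 1 ≤ N) (hn : |n| ≤ 7 * N ^ 2) :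
    (#(sums N n j) : ℝ) ≤ D * (7 * N : ℝ) ^ (5 * δ) := by
  rcases (sums N n j).eq_empty_or_nonempty with h | ⟨s, hs⟩
  · simp only [h, card_empty, Nat.cast_zero]; positivity
  have hT : ((resonance n j).natAbs : ℝ) ≤ (7 * N : ℝ) ^ 5 := by
    rw [Nat.cast_natAbs]; exact_mod_cast abs_resonance_le hN hn hs
  calc (#(sums N n j) : ℝ) ≤ #(resonance n j).natAbs.divisors := by
        exact_mod_cast card_sums_le_card_divisors N n j
    _ ≤ D * ((resonance n j).natAbs : ℝ) ^ δ :=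
        hdiv _ (Int.natAbs_ne_zero.mpr (resonance_ne_zero n j))
    _ ≤ D * ((7 * N : ℝ) ^ 5) ^ δ := by gcongr
    _ = D * (7 * N : ℝ) ^ (5 * δ) := by
        rw [← Real.rpow_natCast_mul (by positivity), Nat.cast_ofNat]

end Dysthe

open Dysthe in
theorem stmt3 :
    ∀ ε : ℝ, 0 < ε → ∃ C : ℝ, 0 < C ∧
      ∀ (N : ℕ), 1 ≤ N → ∀ (n j : ℤ),
        (rcount N n j : ℝ) ≤ C * (N : ℝ) ^ ε := by
  intro ε hε
  obtain ⟨D, hD, hdiv⟩ := Nat.exists_card_divisors_le_mul_rpow (by positivity : 0 < ε / 5)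
  refine ⟨62 + 2 * D * 7 ^ ε, by positivity, fun N hN n j => ?_⟩
  have hNε : (1 : ℝ) ≤ (N : ℝ) ^ ε := Real.one_le_rpow (by exact_mod_cast hN) hε.le
  have hcount : (rcount N n j : ℝ) ≤ 2 * #(sums N n j) := by
    rw [rcount_eq_card_solutions]
    exact_mod_cast card_solutions_le_two_mul_card_sums N n j
  have hD7 : 0 ≤ D * 7 ^ ε := by positivity
  by_cases hn : |n| ≤ 7 * N ^ 2
  · have := card_sums_le_of_small (j := j) hdiv hD.le (by positivity) hN hn
    rw [mul_div_cancel₀ ε (by norm_num : (5 : ℝ) ≠ 0),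
      Real.mul_rpow (by norm_num) (by positivity), ← mul_assoc] at this
    nlinarith
  · have : (#(sums N n j) : ℝ) ≤ 31 := by
      exact_mod_cast card_sums_le_of_large hN (not_le.mp hn)
    nlinarith
end

section
/- For every ε > 0 there exists a constant C_ε > 0 such that for every natural number N ≥ 1 and every sequence a : ℤ → ℂ supported in {n : |n| ≤ N}, the function u(x,t) = Σ_{|n|≤N} a(n) e^{i(nx + P(n)t)} satisfies ‖u‖_{L⁶(T²)} ≤ C_ε N^ε (Σ_{|n|≤N} |a(n)|²)^{1/2}. -/
open scoped BigOperators

noncomputable section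

/-- The solution `u(x,t) = Σ_n a(n) e^{i(nx + P(n)t)}` of the linearized periodic
Dysthe equation with initial datum `u₀(x) = Σ_n a(n) e^{inx}`. -/
def sol (a : ℤ →₀ ℂ) (x t : ℝ) : ℂ :=
  ∑ n ∈ a.support, a n * Complex.exp (Complex.I * (((n : ℝ) * x + (P n : ℝ) * t : ℝ) : ℂ))

/-- `L^p` norm on the torus `T² = [0,2π]_x × [0,2π]_t`. -/
def LpNorm (p : ℝ) (u : ℝ → ℝ → ℂ) : ℝ :=
  (∫ x in (0:ℝ)..(2 * Real.pi), ∫ t in (0:ℝ)..(2 * Real.pi), ‖u x t‖ ^ p) ^ (1 / p)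

/-- Sobolev `H^σ` norm of the initial datum with Fourier coefficients `a`. -/
def HNorm (σ : ℝ) (a : ℤ →₀ ℂ) : ℝ :=
  (∑ n ∈ a.support, (1 + |(n : ℝ)|) ^ (2 * σ) * ‖a n‖ ^ 2) ^ ((1:ℝ) / 2)

/-!
Since `‖u‖⁶ = ‖u³‖²` and `u³ = Σ_{(m,q)} c(m,q) e^{i(mx + qt)}` with
`c(m,q) = Σ_{n₁+n₂+n₃ = m, P n₁ + P n₂ + P n₃ = q} a(n₁) a(n₂) a(n₃)`, Parseval on `T²` gives
`‖u‖₆⁶ = (2π)² Σ |c(m,q)|²`, and Cauchy–Schwarz bounds this by `(2π)²` times the largest fiber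
size times `(Σ |a n|²)³`. On a fiber the product `(3(n₁+n₂)-4)(3(n₂+n₃)-4)(3(n₁+n₃)-4)` is a fixed
nonzero integer of size `O(N³)` whose first two factors determine the triple, so the divisor bound
`d(n) ≤ C_δ n^δ` bounds the fiber size by `C_ε N^{6ε}`.
-/
open Complex Finset intervalIntegral
open scoped Real

def torusChar (k : ℤ × ℤ) (x t : ℝ) : ℂ :=
  exp (I * (((k.1 : ℝ) * x + (k.2 : ℝ) * t : ℝ) : ℂ))

lemma continuous_torusChar (k : ℤ × ℤ) :
    Continuous fun z : ℝ × ℝ => torusChar k z.1 z.2 := by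
  unfold torusChar; fun_prop

lemma torusChar_add (k l : ℤ × ℤ) (x t : ℝ) :
    torusChar (k + l) x t = torusChar k x t * torusChar l x t := by
  simp only [torusChar, ← exp_add, Prod.fst_add, Prod.snd_add]
  push_cast; ring_nf

lemma torusChar_mul_conj (k l : ℤ × ℤ) (x t : ℝ) :
    torusChar k x t * (starRingEnd ℂ) (torusChar l x t) = torusChar (k - l) x t := by
  rw [torusChar, torusChar, torusChar, ← exp_conj, ← exp_add]
  simp only [map_mul, conj_I, conj_ofReal, Prod.fst_sub, Prod.snd_sub]
  push_cast; ring_nf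

lemma integral_exp_int_mul_I (j : ℤ) :
    ∫ x in (0 : ℝ)..2 * π, exp (((j : ℝ) * x : ℝ) * I) = if j = 0 then (2 * π : ℂ) else 0 := by
  split_ifs with hj
  · simp [hj]
  · have hc : (j : ℂ) * I ≠ 0 := by simp [hj, I_ne_zero]
    have hint := integral_exp_mul_complex (a := 0) (b := 2 * π) hc
    have hperiod : ((j : ℂ) * I) * ((2 * π : ℝ) : ℂ) = j * (2 * π * I) := by push_cast; ring
    rw [hperiod, exp_int_mul_two_pi_mul_I] at hint
    have hfun : (fun x : ℝ => exp (((j : ℝ) * x : ℝ) * I)) = fun x : ℝ => exp ((j : ℂ) * I * x) := by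
      funext x; push_cast; ring_nf
    rw [hfun, hint]; simp

lemma integral_integral_torusChar (k : ℤ × ℤ) :
    ∫ x in (0 : ℝ)..2 * π, ∫ t in (0 : ℝ)..2 * π, torusChar k x t
      = if k = 0 then ((2 * π) ^ 2 : ℂ) else 0 := by
  have hsplit : ∀ x t, torusChar k x t
      = exp (((k.1 : ℝ) * x : ℝ) * I) * exp (((k.2 : ℝ) * t : ℝ) * I) := by
    intro x t
    rw [torusChar, ← exp_add]; push_cast; ring_nf
  simp only [hsplit, integral_const_mul, integral_mul_const, integral_exp_int_mul_I]
  obtain ⟨k₁, k₂⟩ := k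
  by_cases h₁ : k₁ = 0 <;> by_cases h₂ : k₂ = 0 <;> simp [h₁, h₂, sq]

lemma integral_integral_finsetSum {ι : Type*} (s : Finset ι) (f : ι → ℝ → ℝ → ℂ)
    (hf : ∀ i ∈ s, Continuous fun z : ℝ × ℝ => f i z.1 z.2) (a b c d : ℝ) :
    ∫ x in a..b, ∫ t in c..d, ∑ i ∈ s, f i x t = ∑ i ∈ s, ∫ x in a..b, ∫ t in c..d, f i x t := by
  have hinner : ∀ x, ∫ t in c..d, ∑ i ∈ s, f i x t = ∑ i ∈ s, ∫ t in c..d, f i x t := fun x =>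
    integral_finsetSum fun i hi =>
      ((hf i hi).comp (continuous_const.prodMk continuous_id)).intervalIntegrable _ _
  simp only [hinner]
  exact integral_finsetSum fun i hi =>
    (continuous_parametric_intervalIntegral_of_continuous' (hf i hi) c d).intervalIntegrable _ _

lemma integral_integral_norm_sq_sum_torusChar (s : Finset (ℤ × ℤ)) (b : ℤ × ℤ → ℂ) :
    ∫ x in (0 : ℝ)..2 * π, ∫ t in (0 : ℝ)..2 * π, ‖∑ k ∈ s, b k * torusChar k x t‖ ^ 2
      = (2 * π) ^ 2 * ∑ k ∈ s, ‖b k‖ ^ 2 := by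
  have hexpand : ∀ x t, ((‖∑ k ∈ s, b k * torusChar k x t‖ ^ 2 : ℝ) : ℂ)
      = ∑ kl ∈ s ×ˢ s, b kl.1 * (starRingEnd ℂ) (b kl.2) * torusChar (kl.1 - kl.2) x t := by
    intro x t
    rw [ofReal_pow, ← mul_conj', map_sum, sum_mul_sum, ← sum_product']
    refine sum_congr rfl fun kl _ => ?_
    rw [map_mul, ← torusChar_mul_conj]; ring
  apply ofReal_injective
  simp_rw [← intervalIntegral.integral_ofReal, hexpand]
  rw [integral_integral_finsetSum (s ×ˢ s)
    (fun kl x t => b kl.1 * (starRingEnd ℂ) (b kl.2) * torusChar (kl.1 - kl.2) x t)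
    (fun kl _ => continuous_const.mul (continuous_torusChar _))]
  simp only [intervalIntegral.integral_const_mul, integral_integral_torusChar, sub_eq_zero, mul_ite,
    mul_zero, sum_product, sum_ite_eq]
  push_cast
  rw [mul_sum]
  exact sum_congr rfl fun k hk => by rw [if_pos hk, mul_conj']; ring

lemma sum_pow_three_eq_sum_product {α R : Type*} [CommSemiring R] (s : Finset α) (f : α → R) :
    (∑ i ∈ s, f i) ^ 3 = ∑ p ∈ s ×ˢ s ×ˢ s, f p.1 * f p.2.1 * f p.2.2 := by
  rw [pow_three, sum_mul_sum, sum_mul_sum, sum_product]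
  simp only [sum_product, mul_sum, mul_assoc]

lemma sum_norm_sq_sum_fiberwise_le {α β E : Type*} [DecidableEq β] [SeminormedAddCommGroup E]
    (T : Finset α) (g : α → β) (f : α → E) (D : ℝ)
    (hD : ∀ k ∈ T.image g, (#{p ∈ T | g p = k} : ℝ) ≤ D) :
    ∑ k ∈ T.image g, ‖∑ p ∈ T with g p = k, f p‖ ^ 2 ≤ D * ∑ p ∈ T, ‖f p‖ ^ 2 := by
  calc ∑ k ∈ T.image g, ‖∑ p ∈ T with g p = k, f p‖ ^ 2
      ≤ ∑ k ∈ T.image g, D * ∑ p ∈ T with g p = k, ‖f p‖ ^ 2 := by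
        refine sum_le_sum fun k hk => ?_
        calc ‖∑ p ∈ T with g p = k, f p‖ ^ 2
            ≤ (∑ p ∈ T with g p = k, ‖f p‖) ^ 2 := by gcongr; exact norm_sum_le _ _
          _ ≤ #{p ∈ T | g p = k} * ∑ p ∈ T with g p = k, ‖f p‖ ^ 2 := sq_sum_le_card_mul_sum_sq
          _ ≤ D * ∑ p ∈ T with g p = k, ‖f p‖ ^ 2 := by gcongr; exact hD k hk
    _ = D * ∑ p ∈ T, ‖f p‖ ^ 2 := by
        rw [← mul_sum, sum_fiberwise_of_maps_to fun p hp => mem_image_of_mem g hp]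

def tripleFreq (p : ℤ × ℤ × ℤ) : ℤ × ℤ :=
  (p.1 + p.2.1 + p.2.2, P p.1 + P p.2.1 + P p.2.2)

def tripleProd (a : ℤ →₀ ℂ) (p : ℤ × ℤ × ℤ) : ℂ :=
  a p.1 * a p.2.1 * a p.2.2

lemma sum_norm_tripleProd_sq (a : ℤ →₀ ℂ) :
    ∑ p ∈ a.support ×ˢ a.support ×ˢ a.support, ‖tripleProd a p‖ ^ 2
      = (∑ n ∈ a.support, ‖a n‖ ^ 2) ^ 3 := by
  simp only [sum_pow_three_eq_sum_product, tripleProd, norm_mul, mul_pow]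

lemma sol_pow_three (a : ℤ →₀ ℂ) (x t : ℝ) :
    sol a x t ^ 3 = ∑ k ∈ (a.support ×ˢ a.support ×ˢ a.support).image tripleFreq,
      (∑ p ∈ a.support ×ˢ a.support ×ˢ a.support with tripleFreq p = k, tripleProd a p)
        * torusChar k x t := by
  have hsol : sol a x t = ∑ n ∈ a.support, a n * torusChar (n, P n) x t := rfl
  have hterm : ∀ p : ℤ × ℤ × ℤ, a p.1 * torusChar (p.1, P p.1) x t
      * (a p.2.1 * torusChar (p.2.1, P p.2.1) x t) * (a p.2.2 * torusChar (p.2.2, P p.2.2) x t)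
      = tripleProd a p * torusChar (tripleFreq p) x t := by
    intro p
    rw [show tripleFreq p = (p.1, P p.1) + (p.2.1, P p.2.1) + (p.2.2, P p.2.2) from rfl,
      torusChar_add, torusChar_add, tripleProd]
    ring
  simp only [hsol, sum_pow_three_eq_sum_product, hterm, sum_mul]
  rw [← sum_fiberwise_of_maps_to fun p hp => mem_image_of_mem tripleFreq hp]
  exact sum_congr rfl fun k _ => sum_congr rfl fun p hp => by rw [(mem_filter.1 hp).2]

lemma integral_integral_norm_sol_rpow_six (a : ℤ →₀ ℂ) :
    ∫ x in (0 : ℝ)..2 * π, ∫ t in (0 : ℝ)..2 * π, ‖sol a x t‖ ^ (6 : ℝ)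
      = (2 * π) ^ 2 * ∑ k ∈ (a.support ×ˢ a.support ×ˢ a.support).image tripleFreq,
          ‖∑ p ∈ a.support ×ˢ a.support ×ˢ a.support with tripleFreq p = k, tripleProd a p‖ ^ 2 := by
  have hsix : ∀ x t, ‖sol a x t‖ ^ (6 : ℝ) = ‖sol a x t ^ 3‖ ^ 2 := by
    intro x t
    rw [norm_pow, ← pow_mul, ← Real.rpow_natCast]; norm_num
  simp_rw [hsix, sol_pow_three]
  exact integral_integral_norm_sq_sum_torusChar _ _

lemma integral_integral_norm_sol_rpow_six_le (a : ℤ →₀ ℂ) (D : ℝ)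
    (hD : ∀ k ∈ (a.support ×ˢ a.support ×ˢ a.support).image tripleFreq,
      (#{p ∈ a.support ×ˢ a.support ×ˢ a.support | tripleFreq p = k} : ℝ) ≤ D) :
    ∫ x in (0 : ℝ)..2 * π, ∫ t in (0 : ℝ)..2 * π, ‖sol a x t‖ ^ (6 : ℝ)
      ≤ (2 * π) ^ 2 * D * (∑ n ∈ a.support, ‖a n‖ ^ 2) ^ 3 := by
  rw [integral_integral_norm_sol_rpow_six, ← sum_norm_tripleProd_sq, mul_assoc]
  gcongr
  exact sum_norm_sq_sum_fiberwise_le _ _ _ _ hD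

lemma LpNorm_le_of_integral_le {p : ℕ} (hp : p ≠ 0) {u : ℝ → ℝ → ℂ} {X : ℝ} (hX : 0 ≤ X)
    (h : ∫ x in (0 : ℝ)..2 * π, ∫ t in (0 : ℝ)..2 * π, ‖u x t‖ ^ (p : ℝ) ≤ X ^ p) :
    LpNorm p u ≤ X := by
  have hnonneg : 0 ≤ ∫ x in (0 : ℝ)..2 * π, ∫ t in (0 : ℝ)..2 * π, ‖u x t‖ ^ (p : ℝ) :=
    integral_nonneg (by positivity) fun x _ =>
      integral_nonneg (by positivity) fun t _ => by positivity
  calc LpNorm p u ≤ (X ^ p) ^ ((p : ℝ)⁻¹) := by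
        rw [LpNorm, one_div]; gcongr
    _ = X := Real.pow_rpow_inv_natCast hX hp

lemma succ_le_mul_two_pow_div (α : ℕ) {k : ℕ} (hk : 0 < k) : α + 1 ≤ k * 2 ^ (α / k) :=
  calc α + 1 ≤ k * (α / k + 1) := Nat.lt_mul_div_succ α hk
    _ ≤ k * 2 ^ (α / k) := Nat.mul_le_mul_left k Nat.lt_two_pow_self

lemma succ_le_ite_mul_rpow_div (α : ℕ) {k p : ℕ} (hk : 0 < k) (hp : 2 ≤ p) :
    (α + 1 : ℝ) ≤ (if p < 2 ^ k then (k : ℝ) else 1) * (p : ℝ) ^ ((α : ℝ) / k) := by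
  split_ifs with hpk
  · calc (α + 1 : ℝ) ≤ k * (2 : ℝ) ^ ((α / k : ℕ) : ℝ) := by
          rw [Real.rpow_natCast]; exact_mod_cast succ_le_mul_two_pow_div α hk
      _ ≤ k * (p : ℝ) ^ ((α : ℝ) / k) := by
          refine mul_le_mul_of_nonneg_left ?_ (by positivity)
          calc (2 : ℝ) ^ ((α / k : ℕ) : ℝ) ≤ 2 ^ ((α : ℝ) / k) :=
                Real.rpow_le_rpow_of_exponent_le (by norm_num) Nat.cast_div_le
            _ ≤ (p : ℝ) ^ ((α : ℝ) / k) := by gcongr; exact_mod_cast hp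
  · calc (α + 1 : ℝ) ≤ 2 ^ α := by exact_mod_cast Nat.lt_two_pow_self
      _ = ((2 : ℝ) ^ k) ^ ((α : ℝ) / k) := by
          rw [← Real.rpow_natCast (2 : ℝ) k, ← Real.rpow_mul (by norm_num), ← Real.rpow_natCast]
          field_simp
      _ ≤ 1 * (p : ℝ) ^ ((α : ℝ) / k) := by
          rw [one_mul]; gcongr; exact_mod_cast not_lt.mp hpk

theorem Nat.card_divisors_le_mul_rpow {k : ℕ} (hk : 0 < k) {n : ℕ} (hn : n ≠ 0) :
    (#n.divisors : ℝ) ≤ k ^ 2 ^ k * (n : ℝ) ^ ((1 : ℝ) / k) := by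
  have hsmall : ∏ p ∈ n.primeFactors, (if p < 2 ^ k then (k : ℝ) else 1) ≤ k ^ 2 ^ k := by
    rw [← prod_filter, prod_const]
    refine pow_le_pow_right₀ (by exact_mod_cast hk) ?_
    calc #{p ∈ n.primeFactors | p < 2 ^ k} ≤ #(range (2 ^ k)) :=
          card_le_card fun p hp => mem_range.mpr (mem_filter.mp hp).2
      _ = 2 ^ k := card_range _
  have hprod : ∏ p ∈ n.primeFactors, (p : ℝ) ^ ((n.factorization p : ℝ) / k)
      = (n : ℝ) ^ ((1 : ℝ) / k) := by
    conv_rhs => rw [Nat.prod_primeFactors_pow_factorization hn]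
    push_cast
    rw [← Real.finsetProd_rpow _ _ fun p _ => by positivity]
    refine prod_congr rfl fun p _ => ?_
    rw [← Real.rpow_natCast, ← Real.rpow_mul (by positivity)]
    ring_nf
  rw [Nat.card_divisors hn]
  push_cast
  calc ∏ p ∈ n.primeFactors, ((n.factorization p : ℝ) + 1)
      ≤ ∏ p ∈ n.primeFactors,
          (if p < 2 ^ k then (k : ℝ) else 1) * (p : ℝ) ^ ((n.factorization p : ℝ) / k) :=
        prod_le_prod (fun _ _ => by positivity) fun p hp =>
          succ_le_ite_mul_rpow_div _ hk (Nat.prime_of_mem_primeFactors hp).two_le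
    _ ≤ k ^ 2 ^ k * (n : ℝ) ^ ((1 : ℝ) / k) := by
        rw [prod_mul_distrib, hprod]
        exact mul_le_mul_of_nonneg_right hsmall (by positivity)

theorem Nat.exists_card_divisors_le_rpow {δ : ℝ} (hδ : 0 < δ) :
    ∃ C > 0, ∀ n : ℕ, n ≠ 0 → (#n.divisors : ℝ) ≤ C * (n : ℝ) ^ δ := by
  set k := ⌈δ⁻¹⌉₊
  have hk : 0 < k := Nat.ceil_pos.mpr (inv_pos.mpr hδ)
  refine ⟨k ^ 2 ^ k, by positivity, fun n hn => ?_⟩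
  have hkδ : (1 : ℝ) / k ≤ δ := by
    rw [one_div]; exact inv_le_of_inv_le₀ hδ (Nat.le_ceil _)
  calc (#n.divisors : ℝ) ≤ k ^ 2 ^ k * (n : ℝ) ^ ((1 : ℝ) / k) :=
        Nat.card_divisors_le_mul_rpow hk hn
    _ ≤ k ^ 2 ^ k * (n : ℝ) ^ δ := by
        have hn1 : (1 : ℝ) ≤ n := by exact_mod_cast Nat.one_le_iff_ne_zero.mpr hn
        exact mul_le_mul_of_nonneg_left (Real.rpow_le_rpow_of_exponent_le hn1 hkδ) (by positivity)

theorem Int.card_divisors (z : ℤ) : #z.divisors = 2 * #z.natAbs.divisors := by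
  rw [Int.divisors, card_disjUnion, card_map, card_map, two_mul]

/-- With `n = z + 2/3` the quadratic term of `P` disappears, and `resonanceProduct (tripleFreq p)`
becomes `27 (z₁ + z₂)(z₂ + z₃)(z₁ + z₃) = 9 ((Σ zᵢ)³ - Σ zᵢ³)`. -/
def resonanceProduct (k : ℤ × ℤ) : ℤ :=
  9 * (P k.1 - k.2) - 36 * k.1 ^ 2 + 96 * k.1 - 64

lemma resonanceProduct_tripleFreq (p : ℤ × ℤ × ℤ) :
    resonanceProduct (tripleFreq p)
      = (3 * (p.1 + p.2.1) - 4) * (3 * (p.2.1 + p.2.2) - 4) * (3 * (p.1 + p.2.2) - 4) := by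
  simp only [resonanceProduct, tripleFreq, P]; ring

lemma resonanceProduct_tripleFreq_ne_zero (p : ℤ × ℤ × ℤ) :
    resonanceProduct (tripleFreq p) ≠ 0 := by
  rw [resonanceProduct_tripleFreq]
  refine mul_ne_zero (mul_ne_zero ?_ ?_) ?_ <;> omega

lemma natAbs_resonanceProduct_tripleFreq_le {N : ℕ} (hN : 1 ≤ N) {p : ℤ × ℤ × ℤ}
    (h₁ : |p.1| ≤ N) (h₂ : |p.2.1| ≤ N) (h₃ : |p.2.2| ≤ N) :
    (resonanceProduct (tripleFreq p)).natAbs ≤ (10 * N) ^ 3 := by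
  have hfactor : ∀ m n : ℤ, |m| ≤ N → |n| ≤ N → |3 * (m + n) - 4| ≤ 10 * N := by
    intro m n hm hn
    rw [abs_le] at hm hn ⊢
    omega
  zify
  rw [resonanceProduct_tripleFreq, abs_mul, abs_mul]
  calc _ ≤ (10 * (N : ℤ)) * (10 * N) * (10 * N) := by
        gcongr
        exacts [hfactor _ _ h₁ h₂, hfactor _ _ h₂ h₃, hfactor _ _ h₁ h₃]
    _ = _ := by ring

/-- On a fiber `p.1 + p.2.1 + p.2.2` is fixed, so `p` is determined by the first two factors in
`resonanceProduct_tripleFreq`, both divisors of the nonzero integer `resonanceProduct k`. -/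
lemma card_fiber_tripleFreq_le (T : Finset (ℤ × ℤ × ℤ)) (k : ℤ × ℤ) :
    #{p ∈ T | tripleFreq p = k} ≤ #(resonanceProduct k).divisors ^ 2 := by
  rw [sq, ← card_product]
  refine card_le_card_of_injOn (fun p => (3 * (p.1 + p.2.1) - 4, 3 * (p.2.1 + p.2.2) - 4))
    (fun p hp => ?_) (fun p hp p' hp' hpp' => ?_)
  · obtain ⟨-, rfl⟩ := mem_filter.mp hp
    have hne := resonanceProduct_tripleFreq_ne_zero p
    simp only [coe_product, Set.mem_prod, mem_coe, Int.mem_divisors, resonanceProduct_tripleFreq,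
      ne_eq] at hne ⊢
    exact ⟨⟨dvd_mul_of_dvd_left (dvd_mul_right _ _) _, hne⟩,
      dvd_mul_of_dvd_left (dvd_mul_left _ _) _, hne⟩
  · have hsum := congrArg Prod.fst ((mem_filter.mp hp).2.trans (mem_filter.mp hp').2.symm)
    simp only [tripleFreq, Prod.mk.injEq] at hsum hpp'
    ext <;> omega

lemma exists_card_fiber_tripleFreq_le {ε : ℝ} (hε : 0 < ε) :
    ∃ C > 0, ∀ N : ℕ, 1 ≤ N → ∀ T : Finset (ℤ × ℤ × ℤ),
      (∀ p ∈ T, |p.1| ≤ N ∧ |p.2.1| ≤ N ∧ |p.2.2| ≤ N) →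
      ∀ k ∈ T.image tripleFreq, (#{p ∈ T | tripleFreq p = k} : ℝ) ≤ C * ((N : ℝ) ^ ε) ^ 6 := by
  obtain ⟨C, hC, hdiv⟩ := Nat.exists_card_divisors_le_rpow hε
  refine ⟨4 * C ^ 2 * ((10 : ℝ) ^ ε) ^ 6, by positivity, fun N hN T hT k hk => ?_⟩
  obtain ⟨p, hpT, rfl⟩ := mem_image.mp hk
  obtain ⟨h₁, h₂, h₃⟩ := hT p hpT
  set n := (resonanceProduct (tripleFreq p)).natAbs
  have hn : n ≠ 0 := Int.natAbs_ne_zero.mpr (resonanceProduct_tripleFreq_ne_zero p)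
  have hnN : (n : ℝ) ≤ (10 * N) ^ 3 := by
    exact_mod_cast natAbs_resonanceProduct_tripleFreq_le hN h₁ h₂ h₃
  calc (#{q ∈ T | tripleFreq q = tripleFreq p} : ℝ) ≤ (2 * #n.divisors : ℕ) ^ 2 := by
        rw [← Int.card_divisors]; exact_mod_cast card_fiber_tripleFreq_le T _
    _ ≤ (2 * (C * ((10 * N) ^ 3 : ℝ) ^ ε)) ^ 2 := by
        push_cast
        gcongr
        exact (hdiv n hn).trans
          (mul_le_mul_of_nonneg_left (Real.rpow_le_rpow (by positivity) hnN hε.le) hC.le)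
    _ = 4 * C ^ 2 * ((10 : ℝ) ^ ε) ^ 6 * ((N : ℝ) ^ ε) ^ 6 := by
        rw [← Real.rpow_pow_comm (by positivity), Real.mul_rpow (by norm_num) (by positivity)]
        ring

theorem stmt4 :
    ∀ ε : ℝ, 0 < ε → ∃ C : ℝ, 0 < C ∧
      ∀ (N : ℕ), 1 ≤ N → ∀ a : ℤ →₀ ℂ, (∀ n ∈ a.support, |n| ≤ (N : ℤ)) →
        LpNorm 6 (sol a) ≤ C * (N : ℝ) ^ ε * (∑ n ∈ a.support, ‖a n‖ ^ 2) ^ ((1:ℝ) / 2) := by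
  intro ε hε
  obtain ⟨C, hC, hfiber⟩ := exists_card_fiber_tripleFreq_le hε
  refine ⟨((2 * π) ^ 2 * C) ^ ((6 : ℕ) : ℝ)⁻¹, by positivity, fun N hN a ha => ?_⟩
  have hbox : ∀ p ∈ a.support ×ˢ a.support ×ˢ a.support,
      |p.1| ≤ N ∧ |p.2.1| ≤ N ∧ |p.2.2| ≤ N := fun p hp => by
    simp only [mem_product] at hp
    exact ⟨ha _ hp.1, ha _ hp.2.1, ha _ hp.2.2⟩
  have hsqrt : ((∑ n ∈ a.support, ‖a n‖ ^ 2) ^ ((1 : ℝ) / 2)) ^ 6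
      = (∑ n ∈ a.support, ‖a n‖ ^ 2) ^ 3 := by
    rw [← Real.sqrt_eq_rpow, show 6 = 2 * 3 by rfl, pow_mul, Real.sq_sqrt (by positivity)]
  rw [show (6 : ℝ) = ((6 : ℕ) : ℝ) by norm_num]
  refine LpNorm_le_of_integral_le (by norm_num) (by positivity) ?_
  calc _ ≤ (2 * π) ^ 2 * (C * ((N : ℝ) ^ ε) ^ 6) * (∑ n ∈ a.support, ‖a n‖ ^ 2) ^ 3 := by
        push_cast; exact integral_integral_norm_sol_rpow_six_le a _ (hfiber N hN _ hbox)
    _ = (((2 * π) ^ 2 * C) ^ ((6 : ℕ) : ℝ)⁻¹) ^ 6 * ((N : ℝ) ^ ε) ^ 6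
          * ((∑ n ∈ a.support, ‖a n‖ ^ 2) ^ ((1 : ℝ) / 2)) ^ 6 := by
        rw [Real.rpow_inv_natCast_pow (by positivity) (by norm_num), hsqrt]; ring
    _ = _ := by ring
end
end

section
/- For all integers n₁, n₂, τ₁, τ₂, setting n = n₁ + n₂ and τ = τ₁ + τ₂, one has the resonance lower bound |τ − P(n)| + |τ₁ − P(n₁)| + |τ₂ − P(n₂)| ≥ |n₁ · n₂ · (3n − 4)|. -/
theorem P_add_sub_P_sub_P (n₁ n₂ : ℤ) :
    P (n₁ + n₂) - P n₁ - P n₂ = n₁ * n₂ * (3 * (n₁ + n₂) - 4) := by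
  unfold P
  ring

theorem stmt13 (n₁ n₂ τ₁ τ₂ : ℤ) :
    |n₁ * n₂ * (3 * (n₁ + n₂) - 4)| ≤
      |τ₁ + τ₂ - P (n₁ + n₂)| + |τ₁ - P n₁| + |τ₂ - P n₂| := by
  have resonance : n₁ * n₂ * (3 * (n₁ + n₂) - 4) =
      -(τ₁ + τ₂ - P (n₁ + n₂)) + (τ₁ - P n₁) + (τ₂ - P n₂) := by
    rw [← P_add_sub_P_sub_P]
    ring
  rw [resonance, ← abs_neg (τ₁ + τ₂ - P (n₁ + n₂))]
  exact abs_add_three _ _ _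
end

section
/- For every real number s ≥ 0 there exists a constant C_s > 0 such that for all trigonometric polynomials u₁, u₂ on T², ‖u₁·u₂‖_{X^{s,0}} ≤ C_s ‖u₁‖_{X^{s,1/3}} ‖u₂‖_{X^{s,1/3}}. -/
open scoped BigOperators

noncomputable section

/-- Japanese bracket `⟨k⟩ = 1 + |k|` of an integer, as a real number. -/
def jap (k : ℤ) : ℝ := 1 + |(k : ℝ)|

/-- A trigonometric polynomial on `T²`, given by its finitely supported family of
space-time Fourier coefficients `f̂(n,τ)`. -/
abbrev TrigPoly := ℤ × ℤ →₀ ℂ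

/-- Pointwise realization `f(x,t) = Σ_{(n,τ)} f̂(n,τ) e^{i(nx+τt)}` of a
trigonometric polynomial on `T²`. -/
def toFun (f : TrigPoly) (x t : ℝ) : ℂ :=
  ∑ p ∈ f.support, f p * Complex.exp (Complex.I * (((p.1 : ℝ) * x + (p.2 : ℝ) * t : ℝ) : ℂ))

/-- The Bourgain `X^{s,b}` norm associated to the dispersion relation `P`. -/
def Xnorm (s b : ℝ) (f : TrigPoly) : ℝ :=
  (∑ p ∈ f.support, jap p.1 ^ (2 * s) * jap (p.2 - P p.1) ^ (2 * b) * ‖f p‖ ^ 2) ^ ((1:ℝ) / 2)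

/-- The Bourgain `Y^{s,b}` norm associated to the dispersion relation `P`. -/
def Ynorm (s b : ℝ) (f : TrigPoly) : ℝ :=
  (∑ n ∈ f.support.image Prod.fst, jap n ^ (2 * s) *
      (∑ τ ∈ f.support.image Prod.snd, jap (τ - P n) ^ b * ‖f (n, τ)‖) ^ 2) ^ ((1:ℝ) / 2)

/-- The `Z^{s,b}` norm: `‖f‖_{Z^{s,b}} = ‖f‖_{X^{s,b}} + ‖f‖_{Y^{s,b-1/2}}`. -/
def Znorm (s b : ℝ) (f : TrigPoly) : ℝ :=
  Xnorm s b f + Ynorm s (b - 1 / 2) f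

/-- Product of trigonometric polynomials: convolution of the coefficients, which
corresponds to the pointwise product of the realized functions. -/
def cmul (f g : TrigPoly) : TrigPoly :=
  f.sum fun a fa => g.sum fun b gb => Finsupp.single (a + b) (fa * gb)

/-- Orthogonal projection `ℙ` onto the zero-spatial-mean subspace:
it kills all coefficients `f̂(0,τ)`. -/
def Pproj (f : TrigPoly) : TrigPoly :=
  Finsupp.filter (fun p : ℤ × ℤ => p.1 ≠ 0) f

/-- Pointwise complex conjugate at the level of Fourier coefficients:
`(conj f)̂(n,τ) = conj (f̂(-n,-τ))`. -/
def conjC (f : TrigPoly) : TrigPoly :=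
  Finsupp.equivMapDomain (Equiv.neg (ℤ × ℤ)) (Finsupp.mapRange (starRingEnd ℂ) (map_zero _) f)


/-!
Bourgain's `L⁴`-type argument. Replace `û₁, û₂` by the nonnegative majorants `⟨n⟩ˢ |ûᵢ|`;
since `⟨n⟩ˢ ≤ ⟨n₁⟩ˢ ⟨n - n₁⟩ˢ`, it suffices to bound `‖a ⋆ b‖_{ℓ²}` by
`‖⟨σ⟩^{1/3} a‖_{ℓ²} ‖⟨σ⟩^{1/3} b‖_{ℓ²}`, where `σ(n, τ) = τ - P n` is the modulation.
Split `a`, `b` into pieces `a_j`, `b_k` on which `⟨σ⟩ ≈ 2ʲ`, resp. `2ᵏ`. By Cauchy–Schwarz,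
`‖a_j ⋆ b_k‖²` is at most `‖a_j‖² ‖b_k‖²` times the number of `(n₁, τ₁)` contributing to one
output frequency `(n, τ)`. In a fixed column `n₁` there are `≲ 2^{min(j,k)}` of them, and the
resonance identity `σ₁ + σ₂ - σ = (3n - 4) n₁ (n - n₁)` leaves `≲ 1 + (2^{max(j,k)} / ⟨n⟩)^{1/2}`
columns, which is `≲ 2^{max(j,k)/3}` once `⟨n⟩ ≥ 2^{max(j,k)/3}`. The `≲ 2^{max(j,k)/3}`
smaller spatial frequencies `n` are treated one at a time, one pair of columns at a time.
Altogether `‖a_j ⋆ b_k‖ ≲ 2^{-|j-k|/6} ‖⟨σ⟩^{1/3} a_j‖ ‖⟨σ⟩^{1/3} b_k‖`, and Schur's test sums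
over `(j, k)`.
-/

open Finset

namespace Finsupp

lemma mem_support_filter {α M : Type*} [Zero M] {a : α →₀ M} {P : α → Prop} [DecidablePred P]
    {q : α} : q ∈ (a.filter P).support ↔ q ∈ a.support ∧ P q := by
  rw [support_filter, Finset.mem_filter]

lemma sum_filter_fiber {α ι M : Type*} [AddCommMonoid M] [DecidableEq ι] (a : α →₀ M)
    (f : α → ι) (s : Finset ι) (h : ∀ q ∈ a.support, f q ∈ s) :
    ∑ i ∈ s, a.filter (f · = i) = a := by
  ext q
  simp only [finsetSum_apply, filter_apply, Finset.sum_ite_eq]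
  by_cases hq : q ∈ a.support
  · simp [h q hq]
  · simp_all

end Finsupp

namespace Dysthe

section Counting

lemma card_le_of_abs_sub_le {F : Finset ℤ} {D : ℝ} (hD : 0 ≤ D)
    (h : ∀ x ∈ F, ∀ y ∈ F, |(x : ℝ) - y| ≤ D) : (#F : ℝ) ≤ D + 1 := by
  rcases F.eq_empty_or_nonempty with rfl | hF
  · simp only [card_empty, Nat.cast_zero]; linarith
  set m := F.min' hF
  have hsub : F ⊆ Icc m (m + ⌊D⌋) := fun x hx => by
    have hmx : m ≤ x := F.min'_le x hx
    have : ((x - m : ℤ) : ℝ) ≤ D := by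
      have := h x hx m (F.min'_mem hF)
      push_cast
      rwa [abs_of_nonneg (by exact_mod_cast sub_nonneg.2 hmx)] at this
    have := Int.le_floor.2 this
    exact mem_Icc.2 ⟨hmx, by omega⟩
  have hfloor : (0 : ℤ) ≤ ⌊D⌋ := Int.floor_nonneg.2 hD
  calc (#F : ℝ) ≤ #(Icc m (m + ⌊D⌋)) := by exact_mod_cast card_le_card hsub
    _ = ⌊D⌋ + 1 := by
      rw [Int.card_Icc, show m + ⌊D⌋ + 1 - m = ⌊D⌋ + 1 by ring]
      exact_mod_cast Int.toNat_of_nonneg (by omega)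
    _ ≤ D + 1 := by linarith [Int.floor_le D]

/-- On either side of `0`, `(x - y)² ≤ |x² - y²|`. -/
lemma card_le_of_abs_sq_sub_sq_le {F : Finset ℤ} {δ : ℝ}
    (h : ∀ x ∈ F, ∀ y ∈ F, |(x : ℝ) ^ 2 - (y : ℝ) ^ 2| ≤ δ) : (#F : ℝ) ≤ 2 * (1 + √δ) := by
  have half : ∀ G ⊆ F, (∀ x ∈ G, ∀ y ∈ G, 0 ≤ (x : ℝ) * y) → (#G : ℝ) ≤ √δ + 1 := by
    intro G hG hsign
    refine card_le_of_abs_sub_le (Real.sqrt_nonneg δ) fun x hx y hy => Real.abs_le_sqrt ?_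
    have := hsign x hx y hy
    have hle : |(x : ℝ) - y| ≤ |(x : ℝ) + y| := sq_le_sq.1 (by nlinarith)
    calc ((x : ℝ) - y) ^ 2 ≤ |(x : ℝ) - y| * |(x : ℝ) + y| := by
          rw [← sq_abs, sq]; exact mul_le_mul_of_nonneg_left hle (abs_nonneg _)
      _ = |(x : ℝ) ^ 2 - (y : ℝ) ^ 2| := by rw [← abs_mul]; ring_nf
      _ ≤ δ := h x (hG hx) y (hG hy)
  have hpos := half {x ∈ F | 0 ≤ x} (filter_subset _ _) fun x hx y hy => by
    have : (0 : ℝ) ≤ x := by exact_mod_cast (mem_filter.1 hx).2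
    have : (0 : ℝ) ≤ y := by exact_mod_cast (mem_filter.1 hy).2
    positivity
  have hneg := half {x ∈ F | ¬ 0 ≤ x} (filter_subset _ _) fun x hx y hy => by
    have : (x : ℝ) < 0 := by exact_mod_cast not_le.1 (mem_filter.1 hx).2
    have : (y : ℝ) < 0 := by exact_mod_cast not_le.1 (mem_filter.1 hy).2
    nlinarith
  have : (#F : ℝ) = #{x ∈ F | 0 ≤ x} + #{x ∈ F | ¬ 0 ≤ x} := by
    exact_mod_cast (card_filter_add_card_filter_not (0 ≤ ·)).symm
  linarith

lemma sum_range_pow_dist_le {r : ℝ} (hr₀ : 0 ≤ r) (hr₁ : r < 1) (j K : ℕ) :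
    ∑ k ∈ range K, r ^ Nat.dist j k ≤ 2 / (1 - r) := by
  have hfib : ∀ d, #{k ∈ range K | Nat.dist j k = d} ≤ 2 := fun d =>
    (card_le_card (show {k ∈ range K | Nat.dist j k = d} ⊆ {j + d, j - d} from fun k hk => by
      have := (mem_filter.1 hk).2
      simp only [mem_insert, mem_singleton]
      unfold Nat.dist at this
      omega)).trans card_le_two
  rw [sum_comp]
  calc ∑ d ∈ (range K).image (Nat.dist j), #{k ∈ range K | Nat.dist j k = d} • r ^ d
      ≤ ∑ d ∈ (range K).image (Nat.dist j), 2 * r ^ d := by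
        refine sum_le_sum fun d _ => ?_
        rw [nsmul_eq_mul]
        exact mul_le_mul_of_nonneg_right (by exact_mod_cast hfib d) (by positivity)
    _ ≤ ∑ d ∈ range (j + K), 2 * r ^ d := by
        refine sum_le_sum_of_subset_of_nonneg (fun d hd => ?_) (fun _ _ _ => by positivity)
        obtain ⟨k, hk, rfl⟩ := mem_image.1 hd
        have := mem_range.1 hk
        unfold Nat.dist; simp only [mem_range]; omega
    _ ≤ 2 / (1 - r) := by
        rw [← mul_sum, ← mul_one_div]
        gcongr
        simpa using geom_sum_Ico_le_of_lt_one (m := 0) (n := j + K) hr₀ hr₁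

end Counting

section L2

variable {ι κ : Type*}

lemma sqrt_sum_sq_sum_le (s : Finset ι) (T : Finset κ) (F : ι → κ → ℝ) :
    √(∑ p ∈ T, (∑ i ∈ s, F i p) ^ 2) ≤ ∑ i ∈ s, √(∑ p ∈ T, F i p ^ 2) := by
  let v : ι → EuclideanSpace ℝ T := fun i => WithLp.toLp 2 fun p => F i p.1
  have hnorm : ∀ G : κ → ℝ, ‖(WithLp.toLp 2 fun p : T => G p.1 : EuclideanSpace ℝ T)‖
      = √(∑ p ∈ T, G p ^ 2) := fun G => by
    rw [EuclideanSpace.norm_eq]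
    simp only [Real.norm_eq_abs, sq_abs]
    rw [sum_coe_sort T (fun p => G p ^ 2)]
  have hsum : ∑ i ∈ s, v i = WithLp.toLp 2 fun p : T => ∑ i ∈ s, F i p.1 := by
    ext p; simp [v]
  calc √(∑ p ∈ T, (∑ i ∈ s, F i p) ^ 2) = ‖∑ i ∈ s, v i‖ := by
        rw [hsum, hnorm (fun p => ∑ i ∈ s, F i p)]
    _ ≤ ∑ i ∈ s, ‖v i‖ := norm_sum_le _ _
    _ = ∑ i ∈ s, √(∑ p ∈ T, F i p ^ 2) := sum_congr rfl fun i _ => hnorm (F i)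

lemma schur_test (s : Finset ι) (t : Finset κ) (K : ι → κ → ℝ) (M : ℝ)
    (hK : ∀ i k, 0 ≤ K i k) (hrow : ∀ i, ∑ k ∈ t, K i k ≤ M) (hcol : ∀ k, ∑ i ∈ s, K i k ≤ M)
    (x : ι → ℝ) (y : κ → ℝ) :
    ∑ i ∈ s, ∑ k ∈ t, K i k * x i * y k ≤ M * √(∑ i ∈ s, x i ^ 2) * √(∑ k ∈ t, y k ^ 2) := by
  rcases t.eq_empty_or_nonempty with rfl | ⟨k₀, hk₀⟩
  · simp
  have hM : 0 ≤ M := (sum_nonneg fun i _ => hK i k₀).trans (hcol k₀)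
  have hx : ∑ ik ∈ s ×ˢ t, (√(K ik.1 ik.2) * x ik.1) ^ 2 ≤ M * ∑ i ∈ s, x i ^ 2 := by
    rw [sum_product, mul_sum]
    refine sum_le_sum fun i _ => ?_
    simp_rw [mul_pow, Real.sq_sqrt (hK _ _), ← sum_mul]
    exact mul_le_mul_of_nonneg_right (hrow i) (sq_nonneg _)
  have hy : ∑ ik ∈ s ×ˢ t, (√(K ik.1 ik.2) * y ik.2) ^ 2 ≤ M * ∑ k ∈ t, y k ^ 2 := by
    rw [sum_product_right, mul_sum]
    refine sum_le_sum fun k _ => ?_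
    simp_rw [mul_pow, Real.sq_sqrt (hK _ _), ← sum_mul]
    exact mul_le_mul_of_nonneg_right (hcol k) (sq_nonneg _)
  calc ∑ i ∈ s, ∑ k ∈ t, K i k * x i * y k
      = ∑ ik ∈ s ×ˢ t, (√(K ik.1 ik.2) * x ik.1) * (√(K ik.1 ik.2) * y ik.2) := by
        rw [sum_product]
        refine sum_congr rfl fun i _ => sum_congr rfl fun k _ => ?_
        rw [mul_mul_mul_comm, Real.mul_self_sqrt (hK i k), mul_assoc]
    _ ≤ √(M * ∑ i ∈ s, x i ^ 2) * √(M * ∑ k ∈ t, y k ^ 2) :=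
        (Real.sum_mul_le_sqrt_mul_sqrt _ _ _).trans
          (mul_le_mul (Real.sqrt_le_sqrt hx) (Real.sqrt_le_sqrt hy) (Real.sqrt_nonneg _)
            (Real.sqrt_nonneg _))
    _ = M * √(∑ i ∈ s, x i ^ 2) * √(∑ k ∈ t, y k ^ 2) := by
        rw [Real.sqrt_mul hM, Real.sqrt_mul hM]
        linear_combination (√(∑ i ∈ s, x i ^ 2) * √(∑ k ∈ t, y k ^ 2)) * Real.mul_self_sqrt hM

def sqNorm (a : ι →₀ ℝ) : ℝ := ∑ q ∈ a.support, a q ^ 2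

lemma sqNorm_nonneg (a : ι →₀ ℝ) : 0 ≤ sqNorm a := sum_nonneg fun _ _ => sq_nonneg _

lemma sqNorm_filter (a : ι →₀ ℝ) (P : ι → Prop) [DecidablePred P] :
    sqNorm (a.filter P) = ∑ q ∈ a.support with P q, a q ^ 2 :=
  sum_congr rfl fun q hq => by rw [Finsupp.filter_apply_pos _ _ (mem_filter.1 hq).2]

lemma sum_sqNorm_filter_le [DecidableEq κ] (a : ι →₀ ℝ) (f : ι → κ) (s : Finset κ) :
    ∑ i ∈ s, sqNorm (a.filter (f · = i)) ≤ sqNorm a := by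
  simp_rw [sqNorm_filter, sum_fiberwise_eq_sum_filter]
  exact sum_le_sum_of_subset_of_nonneg (filter_subset _ _) fun _ _ _ => sq_nonneg _

end L2

section Convolution

variable {G R : Type*} [AddGroup G]

def convolve [Semiring R] (a b : G →₀ R) (p : G) : R := a.sum fun q x => x * b (p - q)

lemma convolve_finsetSum_left [Semiring R] {ι : Type*} (s : Finset ι) (a : ι → G →₀ R)
    (b : G →₀ R) (p : G) : convolve (∑ i ∈ s, a i) b p = ∑ i ∈ s, convolve (a i) b p :=
  (Finsupp.sum_finsetSum_index (fun _ => zero_mul _) fun _ _ _ => add_mul _ _ _).symm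

lemma convolve_finsetSum_right [Semiring R] {ι : Type*} (s : Finset ι) (a : G →₀ R)
    (b : ι → G →₀ R) (p : G) : convolve a (∑ i ∈ s, b i) p = ∑ i ∈ s, convolve a (b i) p := by
  simp only [convolve, Finsupp.finsetSum_apply, mul_sum, Finsupp.sum]
  exact sum_comm

variable [DecidableEq G]

def convIndices (a b : G →₀ ℝ) (p : G) : Finset G := {q ∈ a.support | p - q ∈ b.support}

lemma convIndices_filter (a b : G →₀ ℝ) (P : G → Prop) [DecidablePred P] (p : G) :
    convIndices (a.filter P) b p = {q ∈ convIndices a b p | P q} := by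
  ext q
  simp [convIndices, and_right_comm]

lemma convolve_eq_sum_convIndices (a b : G →₀ ℝ) (p : G) :
    convolve a b p = ∑ q ∈ convIndices a b p, a q * b (p - q) :=
  (sum_filter_of_ne fun _ _ hq => Finsupp.mem_support_iff.2 (right_ne_zero_of_mul hq)).symm

lemma sq_convolve_le (a b : G →₀ ℝ) (p : G) :
    convolve a b p ^ 2 ≤ #(convIndices a b p) * ∑ q ∈ a.support, a q ^ 2 * b (p - q) ^ 2 := by
  rw [convolve_eq_sum_convIndices]
  refine sq_sum_le_card_mul_sum_sq.trans (mul_le_mul_of_nonneg_left ?_ (Nat.cast_nonneg _))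
  simp_rw [← mul_pow]
  exact sum_le_sum_of_subset_of_nonneg (filter_subset _ _) fun _ _ _ => sq_nonneg _

lemma sum_sq_apply_sub_le (b : G →₀ ℝ) (T : Finset G) (q : G) :
    ∑ p ∈ T, b (p - q) ^ 2 ≤ sqNorm b := by
  rw [← sum_image (f := fun r => b r ^ 2) fun _ _ _ _ h => sub_left_injective h,
    ← sum_filter_of_ne (p := (· ∈ b.support)) fun r _ hr =>
      Finsupp.mem_support_iff.2 (pow_ne_zero_iff two_ne_zero |>.1 hr)]
  exact sum_le_sum_of_subset_of_nonneg (fun r hr => (mem_filter.1 hr).2) fun _ _ _ => sq_nonneg _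

lemma sum_sum_sq_mul_sq_le (a b : G →₀ ℝ) (T : Finset G) :
    ∑ p ∈ T, ∑ q ∈ a.support, a q ^ 2 * b (p - q) ^ 2 ≤ sqNorm a * sqNorm b := by
  rw [sum_comm, sqNorm, sum_mul]
  exact sum_le_sum fun q _ => by
    rw [← mul_sum]; exact mul_le_mul_of_nonneg_left (sum_sq_apply_sub_le b T q) (sq_nonneg _)

lemma sum_sq_convolve_le_of_card_le (a b : G →₀ ℝ) (T : Finset G) {N : ℝ} (hN₀ : 0 ≤ N)
    (hN : ∀ p ∈ T, #(convIndices a b p) ≤ N) :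
    ∑ p ∈ T, convolve a b p ^ 2 ≤ N * sqNorm a * sqNorm b := calc
  ∑ p ∈ T, convolve a b p ^ 2 ≤ ∑ p ∈ T, N * ∑ q ∈ a.support, a q ^ 2 * b (p - q) ^ 2 :=
      sum_le_sum fun p hp => (sq_convolve_le a b p).trans
        (mul_le_mul_of_nonneg_right (hN p hp) (sum_nonneg fun _ _ => by positivity))
  _ ≤ N * (sqNorm a * sqNorm b) := by
      rw [← mul_sum]
      exact mul_le_mul_of_nonneg_left (sum_sum_sq_mul_sq_le a b T) hN₀
  _ = N * sqNorm a * sqNorm b := (mul_assoc _ _ _).symm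

end Convolution

section Dispersion

lemma jap_pos (k : ℤ) : 0 < jap k := by unfold jap; positivity

lemma jap_add_le_mul (m n : ℤ) : jap (m + n) ≤ jap m * jap n := by
  unfold jap
  push_cast
  nlinarith [abs_add_le (m : ℝ) n, abs_nonneg (m : ℝ), abs_nonneg (n : ℝ),
    mul_nonneg (abs_nonneg (m : ℝ)) (abs_nonneg (n : ℝ))]

lemma jap_le_two_mul_abs_three_mul_sub_four (n : ℤ) : jap n ≤ 2 * |3 * (n : ℝ) - 4| := by
  have : 1 + |n| ≤ 2 * |3 * n - 4| := by rw [abs_eq_max_neg, abs_eq_max_neg]; omega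
  unfold jap
  exact_mod_cast this

def level (k : ℤ) : ℕ := Nat.log 2 (1 + k.natAbs)

lemma jap_eq_natCast (k : ℤ) : jap k = ((1 + k.natAbs : ℕ) : ℝ) := by
  simp [jap, Nat.cast_natAbs]

lemma two_pow_level_le_jap (k : ℤ) : (2 : ℝ) ^ level k ≤ jap k := by
  rw [jap_eq_natCast]
  exact_mod_cast Nat.pow_log_le_self 2 (by omega)

lemma abs_lt_two_pow_level_succ (k : ℤ) : |k| < 2 ^ (level k + 1) := by
  have := Nat.lt_pow_succ_log_self (b := 2) (by norm_num) (1 + k.natAbs)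
  rw [Int.abs_eq_natAbs, level]
  exact_mod_cast (by omega : k.natAbs < 2 ^ (Nat.log 2 (1 + k.natAbs) + 1))

def modulation (q : ℤ × ℤ) : ℤ := q.2 - P q.1

lemma modulation_add_modulation_sub (p q : ℤ × ℤ) :
    modulation q + modulation (p - q) = modulation p + (3 * p.1 - 4) * (q.1 * (p.1 - q.1)) := by
  simp only [modulation, P, Prod.fst_sub, Prod.snd_sub]
  ring

end Dispersion

section Resonance

variable {a b : ℤ × ℤ →₀ ℝ} {R₁ R₂ : ℕ}

lemma card_convIndices_le_of_fst_eq {n₁ : ℤ} (ha₁ : ∀ q ∈ a.support, q.1 = n₁)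
    (ha : ∀ q ∈ a.support, |modulation q| ≤ R₁) (hb : ∀ r ∈ b.support, |modulation r| ≤ R₂)
    (p : ℤ × ℤ) : #(convIndices a b p) ≤ 2 * min R₁ R₂ + 1 := by
  set F := convIndices a b p
  have hF : ∀ q ∈ F, q.1 = n₁ ∧ |q.2 - P n₁| ≤ R₁ ∧ |q.2 - (p.2 - P (p.1 - n₁))| ≤ R₂ := by
    intro q hq
    obtain ⟨hqa, hqb⟩ := mem_filter.1 hq
    have h₁ := ha₁ q hqa
    refine ⟨h₁, by simpa [modulation, h₁] using ha q hqa, ?_⟩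
    rw [← abs_neg]
    simpa [modulation, h₁, neg_sub, sub_sub, add_comm] using hb _ hqb
  have hinj : Set.InjOn Prod.snd (F : Set (ℤ × ℤ)) := fun q hq q' hq' h =>
    Prod.ext ((hF q hq).1.trans (hF q' hq').1.symm) h
  have hdiam : ∀ x ∈ F.image Prod.snd, ∀ y ∈ F.image Prod.snd,
      |(x : ℝ) - y| ≤ ((2 * min R₁ R₂ : ℕ) : ℝ) := by
    simp only [mem_image]
    rintro _ ⟨q, hq, rfl⟩ _ ⟨q', hq', rfl⟩
    obtain ⟨-, h₁, h₂⟩ := hF q hq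
    obtain ⟨-, h₁', h₂'⟩ := hF q' hq'
    have hR₁ : |q.2 - q'.2| ≤ 2 * R₁ := by
      rw [abs_le] at h₁ h₁' ⊢; constructor <;> linarith
    have hR₂ : |q.2 - q'.2| ≤ 2 * R₂ := by
      rw [abs_le] at h₂ h₂' ⊢; constructor <;> linarith
    have : |q.2 - q'.2| ≤ 2 * (min R₁ R₂ : ℤ) := by
      rcases min_cases (R₁ : ℤ) R₂ with ⟨h, -⟩ | ⟨h, -⟩ <;> rw [h] <;> assumption
    exact_mod_cast this
  have := card_le_of_abs_sub_le (Nat.cast_nonneg _) hdiam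
  rw [card_image_of_injOn hinj] at this
  exact_mod_cast this

/-- By the resonance identity, `(2 n₁ - n)²` is determined up to `O((R₁ + R₂) / ⟨n⟩)` by
`(n, τ)` for every column `n₁` meeting `convIndices a b (n, τ)`. -/
lemma card_image_fst_convIndices_le (ha : ∀ q ∈ a.support, |modulation q| ≤ R₁)
    (hb : ∀ r ∈ b.support, |modulation r| ≤ R₂) (p : ℤ × ℤ) :
    (#((convIndices a b p).image Prod.fst) : ℝ) ≤ 2 * (1 + √(16 * (R₁ + R₂) / jap p.1)) := by
  set n := p.1
  set D : ℤ := 3 * n - 4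
  have hD : jap n ≤ 2 * |(D : ℝ)| := by
    simpa [D] using jap_le_two_mul_abs_three_mul_sub_four n
  have hD₀ : 0 < |(D : ℝ)| := by linarith [jap_pos n]
  have key : ∀ n₁ ∈ (convIndices a b p).image Prod.fst, ∃ E : ℤ, |E| ≤ R₁ + R₂ ∧
      D * (2 * n₁ - n) ^ 2 = D * n ^ 2 - 4 * E + 4 * modulation p := by
    intro n₁ hn₁
    obtain ⟨q, hq, rfl⟩ := mem_image.1 hn₁
    obtain ⟨hqa, hqb⟩ := mem_filter.1 hq
    refine ⟨modulation q + modulation (p - q),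
      (abs_add_le _ _).trans (add_le_add (ha q hqa) (hb _ hqb)), ?_⟩
    rw [modulation_add_modulation_sub]
    ring
  have hinj : Set.InjOn (fun n₁ => 2 * n₁ - n) ↑((convIndices a b p).image Prod.fst) :=
    fun x _ y _ h => by simp only at h; omega
  rw [← card_image_of_injOn hinj]
  refine card_le_of_abs_sq_sub_sq_le fun x hx y hy => ?_
  obtain ⟨n₁, hn₁, rfl⟩ := mem_image.1 hx
  obtain ⟨n₂, hn₂, rfl⟩ := mem_image.1 hy
  obtain ⟨E₁, hE₁, h₁⟩ := key n₁ hn₁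
  obtain ⟨E₂, hE₂, h₂⟩ := key n₂ hn₂
  have hE : |(E₁ : ℝ)| + |(E₂ : ℝ)| ≤ 2 * (R₁ + R₂) := by
    rw [← Int.cast_abs, ← Int.cast_abs]
    exact_mod_cast (by linarith : |E₁| + |E₂| ≤ 2 * ((R₁ : ℤ) + R₂))
  have hdiff : (D : ℝ) * (((2 * n₁ - n : ℤ) : ℝ) ^ 2 - ((2 * n₂ - n : ℤ) : ℝ) ^ 2)
      = 4 * ((E₂ : ℝ) - E₁) := by
    have h₁' := congrArg (Int.cast : ℤ → ℝ) h₁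
    have h₂' := congrArg (Int.cast : ℤ → ℝ) h₂
    push_cast at h₁' h₂' ⊢
    linear_combination h₁' - h₂'
  calc |(((2 * n₁ - n : ℤ) : ℝ)) ^ 2 - ((2 * n₂ - n : ℤ) : ℝ) ^ 2|
      = 4 * |(E₂ : ℝ) - E₁| / |(D : ℝ)| := by
        rw [eq_div_iff hD₀.ne', mul_comm, ← abs_mul, hdiff, abs_mul, abs_of_pos four_pos]
    _ ≤ 4 * (2 * (R₁ + R₂)) / (jap n / 2) := by
        gcongr
        · linarith [jap_pos n]
        · exact (abs_sub _ _).trans (by linarith)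
        · linarith
    _ = 16 * (R₁ + R₂) / jap n := by ring

lemma convolve_eq_sum_columns (a b : ℤ × ℤ →₀ ℝ) (p : ℤ × ℤ) :
    convolve a b p = ∑ n₁ ∈ a.support.image Prod.fst,
      convolve (a.filter (·.1 = n₁)) (b.filter (·.1 = p.1 - n₁)) p := by
  conv_lhs => rw [← a.sum_filter_fiber Prod.fst _ fun q hq => mem_image_of_mem _ hq]
  rw [convolve_finsetSum_left]
  refine sum_congr rfl fun n₁ _ => Finsupp.sum_congr fun q hq => ?_
  have : q.1 = n₁ := (mem_filter.1 hq).2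
  simp [this]

lemma sum_sq_convolve_le_of_fst_eq (ha : ∀ q ∈ a.support, |modulation q| ≤ R₁)
    (hb : ∀ r ∈ b.support, |modulation r| ≤ R₂) {n : ℤ} (T : Finset (ℤ × ℤ))
    (hT : ∀ p ∈ T, p.1 = n) :
    ∑ p ∈ T, convolve a b p ^ 2 ≤ (2 * min R₁ R₂ + 1 : ℕ) * sqNorm a * sqNorm b := by
  set N : ℝ := ((2 * min R₁ R₂ + 1 : ℕ) : ℝ)
  set I := a.support.image Prod.fst
  set A : ℤ → ℤ × ℤ →₀ ℝ := fun n₁ => a.filter (·.1 = n₁)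
  set B : ℤ → ℤ × ℤ →₀ ℝ := fun n₂ => b.filter (·.1 = n₂)
  have hcol : ∀ n₁ ∈ I, √(∑ p ∈ T, convolve (A n₁) (B (n - n₁)) p ^ 2)
      ≤ √N * (√(sqNorm (A n₁)) * √(sqNorm (B (n - n₁)))) := by
    intro n₁ _
    rw [← Real.sqrt_mul (sqNorm_nonneg _), ← Real.sqrt_mul (Nat.cast_nonneg _), ← mul_assoc]
    refine Real.sqrt_le_sqrt (sum_sq_convolve_le_of_card_le _ _ T (Nat.cast_nonneg _)
      fun p _ => ?_)
    exact_mod_cast card_convIndices_le_of_fst_eq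
      (fun q hq => (Finsupp.mem_support_filter.1 hq).2)
      (fun q hq => ha q (Finsupp.mem_support_filter.1 hq).1)
      (fun r hr => hb r (Finsupp.mem_support_filter.1 hr).1) p
  have hB : ∑ n₁ ∈ I, sqNorm (B (n - n₁)) ≤ sqNorm b := by
    rw [← sum_image (f := fun n₂ => sqNorm (B n₂)) fun x _ y _ h => by simpa using h]
    exact sum_sqNorm_filter_le b Prod.fst _
  have hroot : √(∑ p ∈ T, convolve a b p ^ 2) ≤ √N * (√(sqNorm a) * √(sqNorm b)) := calc
    √(∑ p ∈ T, convolve a b p ^ 2)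
      = √(∑ p ∈ T, (∑ n₁ ∈ I, convolve (A n₁) (B (n - n₁)) p) ^ 2) := by
        congr 1
        refine sum_congr rfl fun p hp => ?_
        rw [convolve_eq_sum_columns, hT p hp]
    _ ≤ ∑ n₁ ∈ I, √(∑ p ∈ T, convolve (A n₁) (B (n - n₁)) p ^ 2) := sqrt_sum_sq_sum_le _ _ _
    _ ≤ √N * ∑ n₁ ∈ I, √(sqNorm (A n₁)) * √(sqNorm (B (n - n₁))) := by
        rw [mul_sum]; exact sum_le_sum hcol
    _ ≤ √N * (√(sqNorm a) * √(sqNorm b)) := by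
        gcongr
        refine (Real.sum_sqrt_mul_sqrt_le I (fun _ => sqNorm_nonneg _)
          fun _ => sqNorm_nonneg _).trans ?_
        gcongr
        exact sum_sqNorm_filter_le a Prod.fst I
  rw [← Real.sqrt_mul (sqNorm_nonneg _), ← Real.sqrt_mul (Nat.cast_nonneg _), ← mul_assoc]
    at hroot
  have := sqNorm_nonneg a; have := sqNorm_nonneg b
  exact (Real.sqrt_le_sqrt_iff (by positivity)).1 hroot

/-- Output frequencies with `⟨n⟩ < Λ` are handled one spatial frequency at a time, the others
through the resonance bound on the number of columns. -/
lemma sum_sq_convolve_le_of_abs_modulation_le (ha : ∀ q ∈ a.support, |modulation q| ≤ R₁)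
    (hb : ∀ r ∈ b.support, |modulation r| ≤ R₂) (T : Finset (ℤ × ℤ)) {Λ : ℝ} (hΛ : 0 < Λ) :
    ∑ p ∈ T, convolve a b p ^ 2 ≤ (2 * min R₁ R₂ + 1 : ℕ) *
      (2 * Λ + 1 + 2 * (1 + √(16 * (R₁ + R₂) / Λ))) * sqNorm a * sqNorm b := by
  set N : ℝ := ((2 * min R₁ R₂ + 1 : ℕ) : ℝ)
  have hAB : 0 ≤ N * sqNorm a * sqNorm b := by
    have := sqNorm_nonneg a; have := sqNorm_nonneg b; positivity
  set low := {p ∈ T | jap p.1 < Λ}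
  have hlow : ∑ p ∈ low, convolve a b p ^ 2 ≤ (2 * Λ + 1) * (N * sqNorm a * sqNorm b) := calc
    ∑ p ∈ low, convolve a b p ^ 2
      = ∑ n ∈ low.image Prod.fst, ∑ p ∈ low with p.1 = n, convolve a b p ^ 2 :=
        (sum_fiberwise_of_maps_to (fun p hp => mem_image_of_mem _ hp) _).symm
    _ ≤ ∑ n ∈ low.image Prod.fst, N * sqNorm a * sqNorm b :=
        sum_le_sum fun n _ => sum_sq_convolve_le_of_fst_eq ha hb _ fun p hp => (mem_filter.1 hp).2
    _ ≤ (2 * Λ + 1) * (N * sqNorm a * sqNorm b) := by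
        rw [sum_const, nsmul_eq_mul]
        refine mul_le_mul_of_nonneg_right (card_le_of_abs_sub_le (by positivity) ?_) hAB
        simp only [mem_image, low, mem_filter]
        rintro _ ⟨x, ⟨-, hx⟩, rfl⟩ _ ⟨y, ⟨-, hy⟩, rfl⟩
        unfold jap at hx hy
        linarith [abs_sub (x.1 : ℝ) y.1]
  have hhigh : ∑ p ∈ T with ¬ jap p.1 < Λ, convolve a b p ^ 2
      ≤ N * (2 * (1 + √(16 * (R₁ + R₂) / Λ))) * sqNorm a * sqNorm b := by
    refine sum_sq_convolve_le_of_card_le _ _ _ (by positivity) fun p hp => ?_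
    have hΛp : Λ ≤ jap p.1 := not_lt.1 (mem_filter.1 hp).2
    have hcols : #(convIndices a b p)
        ≤ (2 * min R₁ R₂ + 1) * #((convIndices a b p).image Prod.fst) :=
      card_le_mul_card_image _ _ fun n₁ _ => by
        rw [← convIndices_filter]
        exact card_convIndices_le_of_fst_eq (fun q hq => (Finsupp.mem_support_filter.1 hq).2)
          (fun q hq => ha q (Finsupp.mem_support_filter.1 hq).1) hb p
    calc (#(convIndices a b p) : ℝ) ≤ N * #((convIndices a b p).image Prod.fst) := by
          simp only [N]; exact_mod_cast hcols
      _ ≤ N * (2 * (1 + √(16 * (R₁ + R₂) / jap p.1))) :=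
          mul_le_mul_of_nonneg_left (card_image_fst_convIndices_le ha hb p) (Nat.cast_nonneg _)
      _ ≤ N * (2 * (1 + √(16 * (R₁ + R₂) / Λ))) := by gcongr
  rw [← sum_filter_add_sum_filter_not T (jap ·.1 < Λ)]
  linear_combination hlow + hhigh

end Resonance

section Dyadic

/-- The square of the `X^{0,1/3}` norm. -/
def modSqNorm (a : ℤ × ℤ →₀ ℝ) : ℝ :=
  ∑ q ∈ a.support, jap (modulation q) ^ (2 / 3 : ℝ) * a q ^ 2

lemma modSqNorm_nonneg (a : ℤ × ℤ →₀ ℝ) : 0 ≤ modSqNorm a :=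
  sum_nonneg fun _ _ => mul_nonneg (Real.rpow_nonneg (jap_pos _).le _) (sq_nonneg _)

lemma sum_modSqNorm_filter {ι : Type*} [DecidableEq ι] (a : ℤ × ℤ →₀ ℝ) (f : ℤ × ℤ → ι)
    (s : Finset ι) (h : ∀ q ∈ a.support, f q ∈ s) :
    ∑ i ∈ s, modSqNorm (a.filter (f · = i)) = modSqNorm a := by
  rw [modSqNorm, ← sum_fiberwise_of_maps_to h]
  exact sum_congr rfl fun i _ => sum_congr rfl fun q hq => by
    rw [Finsupp.filter_apply_pos (f · = i) _ (mem_filter.1 hq).2]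

/-- All dyadic weights below (`2^{2j/3}`, `2^{max(j,k)/3}`, `2^{-|j-k|/6}`) are integer powers
of `ρ = 2^{1/6}`. -/
def ρ : ℝ := 2 ^ (6 : ℝ)⁻¹

lemma one_lt_ρ : 1 < ρ := Real.one_lt_rpow (by norm_num) (by norm_num)

lemma ρ_pos : 0 < ρ := one_pos.trans one_lt_ρ

lemma ρ_pow (n : ℕ) : ρ ^ n = 2 ^ ((n : ℝ) / 6) := by
  rw [ρ, ← Real.rpow_natCast, ← Real.rpow_mul (by norm_num)]
  ring_nf

lemma ρ_pow_six_mul (n : ℕ) : ρ ^ (6 * n) = 2 ^ n := by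
  rw [ρ_pow]; push_cast
  rw [mul_div_cancel_left₀ _ (by norm_num), Real.rpow_natCast]

lemma ρ_pow_le_jap_rpow (k : ℤ) : ρ ^ (4 * level k) ≤ jap k ^ (2 / 3 : ℝ) := calc
  ρ ^ (4 * level k) = ((2 : ℝ) ^ level k) ^ (2 / 3 : ℝ) := by
    rw [ρ_pow, ← Real.rpow_natCast, ← Real.rpow_mul (by norm_num)]
    push_cast; ring_nf
  _ ≤ jap k ^ (2 / 3 : ℝ) := by gcongr; exact two_pow_level_le_jap k

variable {a b : ℤ × ℤ →₀ ℝ} {j k : ℕ}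

lemma ρ_pow_mul_sqNorm_le (ha : ∀ q ∈ a.support, level (modulation q) = j) :
    ρ ^ (4 * j) * sqNorm a ≤ modSqNorm a := by
  rw [sqNorm, mul_sum]
  exact sum_le_sum fun q hq => by
    rw [← ha q hq]; gcongr; exact ρ_pow_le_jap_rpow _

lemma abs_modulation_le_of_level (ha : ∀ q ∈ a.support, level (modulation q) = j) :
    ∀ q ∈ a.support, |modulation q| ≤ ((2 ^ (j + 1) : ℕ) : ℤ) := fun q hq => by
  have := abs_lt_two_pow_level_succ (modulation q)
  rw [ha q hq] at this
  push_cast; exact this.le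

lemma sum_sq_convolve_le_of_level (ha : ∀ q ∈ a.support, level (modulation q) = j)
    (hb : ∀ r ∈ b.support, level (modulation r) = k) (T : Finset (ℤ × ℤ)) :
    ∑ p ∈ T, convolve a b p ^ 2
      ≤ 105 * ρ ^ (6 * min j k + 2 * max j k) * sqNorm a * sqNorm b := by
  set m := max j k
  have := ρ_pos
  have hcount : ((2 * min (2 ^ (j + 1)) (2 ^ (k + 1)) + 1 : ℕ) : ℝ) ≤ 5 * ρ ^ (6 * min j k) := by
    rw [ρ_pow_six_mul]
    have : 2 * min (2 ^ (j + 1)) (2 ^ (k + 1)) + 1 ≤ 5 * 2 ^ min j k := by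
      rcases le_total j k with h | h
      · rw [min_eq_left h, min_eq_left (Nat.pow_le_pow_right two_pos (by omega))]
        have := Nat.one_le_two_pow (n := j); rw [pow_succ]; omega
      · rw [min_eq_right h, min_eq_right (Nat.pow_le_pow_right two_pos (by omega))]
        have := Nat.one_le_two_pow (n := k); rw [pow_succ]; omega
    exact_mod_cast this
  have hroot : √(16 * (((2 ^ (j + 1) : ℕ) : ℝ) + ((2 ^ (k + 1) : ℕ) : ℝ)) / ρ ^ (2 * m))
      ≤ 8 * ρ ^ (2 * m) := by
    have := pow_pos ρ_pos (2 * m)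
    rw [Real.sqrt_le_left (by positivity), div_le_iff₀ this]
    have hj : (2 : ℝ) ^ j ≤ 2 ^ m := pow_le_pow_right₀ (by norm_num) (le_max_left j k)
    have hk : (2 : ℝ) ^ k ≤ 2 ^ m := pow_le_pow_right₀ (by norm_num) (le_max_right j k)
    have : (8 * ρ ^ (2 * m)) ^ 2 * ρ ^ (2 * m) = 64 * 2 ^ m := by rw [← ρ_pow_six_mul]; ring
    push_cast
    rw [this, pow_succ, pow_succ]
    linarith
  have hΛ : 1 ≤ ρ ^ (2 * m) := one_le_pow₀ one_lt_ρ.le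
  refine (sum_sq_convolve_le_of_abs_modulation_le (abs_modulation_le_of_level ha)
    (abs_modulation_le_of_level hb) T (Λ := ρ ^ (2 * m)) (by positivity)).trans
    (mul_le_mul_of_nonneg_right (mul_le_mul_of_nonneg_right ?_ (sqNorm_nonneg a))
      (sqNorm_nonneg b))
  calc _ ≤ 5 * ρ ^ (6 * min j k) * (2 * ρ ^ (2 * m) + 1 + 2 * (1 + 8 * ρ ^ (2 * m))) := by
        gcongr
    _ ≤ 5 * ρ ^ (6 * min j k) * (21 * ρ ^ (2 * m)) := by gcongr; linarith
    _ = 105 * ρ ^ (6 * min j k + 2 * m) := by ring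

lemma sqrt_sum_sq_convolve_le_of_level (ha : ∀ q ∈ a.support, level (modulation q) = j)
    (hb : ∀ r ∈ b.support, level (modulation r) = k) (T : Finset (ℤ × ℤ)) :
    √(∑ p ∈ T, convolve a b p ^ 2)
      ≤ √105 * ρ⁻¹ ^ Nat.dist j k * √(modSqNorm a) * √(modSqNorm b) := by
  have := ρ_pos
  have hexp : 2 * Nat.dist j k + (6 * min j k + 2 * max j k) = 4 * j + 4 * k := by
    unfold Nat.dist; omega
  have hweighted : (ρ ^ Nat.dist j k) ^ 2 * ∑ p ∈ T, convolve a b p ^ 2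
      ≤ 105 * modSqNorm a * modSqNorm b := calc
    _ ≤ (ρ ^ Nat.dist j k) ^ 2 * (105 * ρ ^ (6 * min j k + 2 * max j k) * sqNorm a * sqNorm b) :=
        by gcongr; exact sum_sq_convolve_le_of_level ha hb T
    _ = 105 * ρ ^ (2 * Nat.dist j k + (6 * min j k + 2 * max j k)) * sqNorm a * sqNorm b := by
        ring
    _ = 105 * (ρ ^ (4 * j) * sqNorm a) * (ρ ^ (4 * k) * sqNorm b) := by rw [hexp]; ring
    _ ≤ 105 * modSqNorm a * modSqNorm b :=
        mul_le_mul (mul_le_mul_of_nonneg_left (ρ_pow_mul_sqNorm_le ha) (by norm_num))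
          (ρ_pow_mul_sqNorm_le hb) (by have := sqNorm_nonneg b; positivity)
          (by have := modSqNorm_nonneg a; positivity)
  have hd : 0 < ρ ^ Nat.dist j k := pow_pos ρ_pos _
  calc √(∑ p ∈ T, convolve a b p ^ 2)
      = (ρ ^ Nat.dist j k)⁻¹ * √((ρ ^ Nat.dist j k) ^ 2 * ∑ p ∈ T, convolve a b p ^ 2) := by
        rw [Real.sqrt_mul (sq_nonneg _), Real.sqrt_sq hd.le, inv_mul_cancel_left₀ hd.ne']
    _ ≤ (ρ ^ Nat.dist j k)⁻¹ * √(105 * modSqNorm a * modSqNorm b) := by gcongr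
    _ = √105 * ρ⁻¹ ^ Nat.dist j k * √(modSqNorm a) * √(modSqNorm b) := by
        have := modSqNorm_nonneg a
        rw [Real.sqrt_mul (by positivity), Real.sqrt_mul (by norm_num), inv_pow]
        ring

def bilinearConst : ℝ := √105 * (2 / (1 - ρ⁻¹))

lemma bilinearConst_pos : 0 < bilinearConst := by
  have := sub_pos.2 (inv_lt_one_of_one_lt₀ one_lt_ρ)
  unfold bilinearConst; positivity

theorem sqrt_sum_sq_convolve_le (a b : ℤ × ℤ →₀ ℝ) (T : Finset (ℤ × ℤ)) :
    √(∑ p ∈ T, convolve a b p ^ 2) ≤ bilinearConst * √(modSqNorm a) * √(modSqNorm b) := by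
  set lev : ℤ × ℤ → ℕ := fun q => level (modulation q)
  set J := a.support.sup lev + 1
  set K := b.support.sup lev + 1
  have hJ : ∀ q ∈ a.support, lev q ∈ range J := fun _ hq =>
    mem_range.2 (Nat.lt_succ_of_le (le_sup hq))
  have hK : ∀ q ∈ b.support, lev q ∈ range K := fun _ hq =>
    mem_range.2 (Nat.lt_succ_of_le (le_sup hq))
  set A : ℕ → ℤ × ℤ →₀ ℝ := fun j => a.filter (lev · = j)
  set B : ℕ → ℤ × ℤ →₀ ℝ := fun k => b.filter (lev · = k)
  have hdecomp : ∀ p, convolve a b p = ∑ jk ∈ range J ×ˢ range K, convolve (A jk.1) (B jk.2) p := by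
    intro p
    conv_lhs => rw [← a.sum_filter_fiber lev _ hJ, ← b.sum_filter_fiber lev _ hK]
    rw [convolve_finsetSum_left, sum_product]
    simp_rw [convolve_finsetSum_right, A, B]
  set x : ℕ → ℝ := fun j => √(modSqNorm (A j))
  set y : ℕ → ℝ := fun k => √(modSqNorm (B k))
  have hx : ∑ j ∈ range J, x j ^ 2 = modSqNorm a := by
    simp_rw [x, Real.sq_sqrt (modSqNorm_nonneg _)]
    exact sum_modSqNorm_filter a lev _ hJ
  have hy : ∑ k ∈ range K, y k ^ 2 = modSqNorm b := by
    simp_rw [y, Real.sq_sqrt (modSqNorm_nonneg _)]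
    exact sum_modSqNorm_filter b lev _ hK
  have hr₀ : 0 ≤ ρ⁻¹ := inv_nonneg.2 ρ_pos.le
  have hr₁ : ρ⁻¹ < 1 := inv_lt_one_of_one_lt₀ one_lt_ρ
  calc √(∑ p ∈ T, convolve a b p ^ 2)
      = √(∑ p ∈ T, (∑ jk ∈ range J ×ˢ range K, convolve (A jk.1) (B jk.2) p) ^ 2) := by
        simp_rw [hdecomp]
    _ ≤ ∑ jk ∈ range J ×ˢ range K, √(∑ p ∈ T, convolve (A jk.1) (B jk.2) p ^ 2) :=
        sqrt_sum_sq_sum_le _ _ _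
    _ ≤ ∑ jk ∈ range J ×ˢ range K, √105 * ρ⁻¹ ^ Nat.dist jk.1 jk.2 * x jk.1 * y jk.2 :=
        sum_le_sum fun jk _ => sqrt_sum_sq_convolve_le_of_level
          (fun _ hq => (Finsupp.mem_support_filter.1 hq).2)
          (fun _ hq => (Finsupp.mem_support_filter.1 hq).2) T
    _ = √105 * ∑ j ∈ range J, ∑ k ∈ range K, ρ⁻¹ ^ Nat.dist j k * x j * y k := by
        rw [sum_product, mul_sum]
        exact sum_congr rfl fun j _ => by rw [mul_sum]; exact sum_congr rfl fun k _ => by ring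
    _ ≤ √105 * (2 / (1 - ρ⁻¹) * √(∑ j ∈ range J, x j ^ 2) * √(∑ k ∈ range K, y k ^ 2)) := by
        gcongr
        exact schur_test _ _ _ _ (fun _ _ => pow_nonneg hr₀ _)
          (fun j => sum_range_pow_dist_le hr₀ hr₁ j K)
          (fun k => by simp_rw [Nat.dist_comm _ k]; exact sum_range_pow_dist_le hr₀ hr₁ k J) x y
    _ = bilinearConst * √(modSqNorm a) * √(modSqNorm b) := by
        rw [hx, hy, bilinearConst]; ring

end Dyadic

section TrigPoly

lemma cmul_apply (u₁ u₂ : TrigPoly) (p : ℤ × ℤ) : cmul u₁ u₂ p = convolve u₁ u₂ p := by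
  classical
  simp only [cmul, convolve, Finsupp.sum, Finsupp.finsetSum_apply, Finsupp.single_apply]
  refine sum_congr rfl fun q _ => ?_
  simp_rw [← eq_sub_iff_add_eq', sum_ite_eq']
  split_ifs with h
  · rfl
  · rw [Finsupp.notMem_support_iff.1 h, mul_zero]

def weightedAbs (s : ℝ) (u : TrigPoly) : ℤ × ℤ →₀ ℝ :=
  Finsupp.onFinset u.support (fun q => jap q.1 ^ s * ‖u q‖) fun q hq =>
    Finsupp.mem_support_iff.2 fun h => hq (by simp [h])

lemma weightedAbs_apply (s : ℝ) (u : TrigPoly) (q : ℤ × ℤ) :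
    weightedAbs s u q = jap q.1 ^ s * ‖u q‖ := rfl

lemma support_weightedAbs (s : ℝ) (u : TrigPoly) : (weightedAbs s u).support = u.support := by
  classical
  rw [weightedAbs, Finsupp.support_onFinset]
  exact filter_true_of_mem fun q hq => mul_ne_zero (Real.rpow_pos_of_pos (jap_pos _) _).ne'
    (norm_ne_zero_iff.2 (Finsupp.mem_support_iff.1 hq))

lemma rpow_mul_sq {x : ℝ} (hx : 0 ≤ x) (s y : ℝ) : (x ^ s * y) ^ 2 = x ^ (2 * s) * y ^ 2 := by
  rw [mul_pow, ← Real.rpow_natCast, ← Real.rpow_mul hx, Nat.cast_ofNat, mul_comm s]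

lemma sqrt_modSqNorm_weightedAbs (s : ℝ) (u : TrigPoly) :
    √(modSqNorm (weightedAbs s u)) = Xnorm s (1 / 3) u := by
  rw [Xnorm, ← Real.sqrt_eq_rpow, modSqNorm, support_weightedAbs]
  congr 1
  refine sum_congr rfl fun q _ => ?_
  rw [weightedAbs_apply, rpow_mul_sq (jap_pos _).le, modulation]
  ring_nf

lemma Xnorm_zero (s : ℝ) (f : TrigPoly) :
    Xnorm s 0 f = √(∑ p ∈ f.support, (jap p.1 ^ s * ‖f p‖) ^ 2) := by
  rw [Xnorm, ← Real.sqrt_eq_rpow]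
  congr 1
  refine sum_congr rfl fun p _ => ?_
  rw [rpow_mul_sq (jap_pos _).le, mul_zero, Real.rpow_zero, mul_one]

lemma jap_rpow_mul_norm_cmul_le {s : ℝ} (hs : 0 ≤ s) (u₁ u₂ : TrigPoly) (p : ℤ × ℤ) :
    jap p.1 ^ s * ‖cmul u₁ u₂ p‖ ≤ convolve (weightedAbs s u₁) (weightedAbs s u₂) p := by
  rw [cmul_apply, convolve, convolve, Finsupp.sum, Finsupp.sum, support_weightedAbs, mul_comm]
  refine (mul_le_mul_of_nonneg_right (norm_sum_le _ _)
    (Real.rpow_nonneg (jap_pos _).le _)).trans ?_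
  rw [sum_mul]
  refine sum_le_sum fun q _ => ?_
  have hjap : jap p.1 ^ s ≤ jap q.1 ^ s * jap (p - q).1 ^ s := by
    rw [← Real.mul_rpow (jap_pos _).le (jap_pos _).le]
    exact Real.rpow_le_rpow (jap_pos _).le (by simpa using jap_add_le_mul q.1 (p.1 - q.1)) hs
  rw [weightedAbs_apply, weightedAbs_apply, norm_mul]
  calc ‖u₁ q‖ * ‖u₂ (p - q)‖ * jap p.1 ^ s
      ≤ ‖u₁ q‖ * ‖u₂ (p - q)‖ * (jap q.1 ^ s * jap (p - q).1 ^ s) := by gcongr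
    _ = _ := by ring

end TrigPoly

end Dysthe

open Dysthe in
theorem stmt16 :
    ∀ s : ℝ, 0 ≤ s → ∃ C : ℝ, 0 < C ∧
      ∀ u₁ u₂ : TrigPoly,
        Xnorm s 0 (cmul u₁ u₂) ≤ C * Xnorm s (1 / 3) u₁ * Xnorm s (1 / 3) u₂ := by
  intro s hs
  refine ⟨bilinearConst, bilinearConst_pos, fun u₁ u₂ => ?_⟩
  calc Xnorm s 0 (cmul u₁ u₂)
      = √(∑ p ∈ (cmul u₁ u₂).support, (jap p.1 ^ s * ‖cmul u₁ u₂ p‖) ^ 2) := Xnorm_zero s _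
    _ ≤ √(∑ p ∈ (cmul u₁ u₂).support, convolve (weightedAbs s u₁) (weightedAbs s u₂) p ^ 2) := by
        gcongr with p
        · exact mul_nonneg (Real.rpow_nonneg (jap_pos _).le _) (norm_nonneg _)
        · exact jap_rpow_mul_norm_cmul_le hs u₁ u₂ p
    _ ≤ bilinearConst * √(modSqNorm (weightedAbs s u₁)) * √(modSqNorm (weightedAbs s u₂)) :=
        sqrt_sum_sq_convolve_le _ _ _
    _ = bilinearConst * Xnorm s (1 / 3) u₁ * Xnorm s (1 / 3) u₂ := by
        rw [sqrt_modSqNorm_weightedAbs, sqrt_modSqNorm_weightedAbs]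
end
end
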